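/- arXiv:1111.6044 — 10 statements merged into one kernel-verified Lean document; each statement's English description precedes it below -/
import Mathlib

section
/- Let R be a commutative ring and (T_j)_{j∈ℤ} a family of elements of R with only finitely many nonzero. For integers j, k define I(k) = {0,...,k} if k ≥ 0 and I(k) = {k+1,...,0} if k < 0. Then ∑_{i ∈ ℤ \ I(k-j)} (-1)^{[i<0]} T_{j+i} T_{k-i} = -[j>k] · T_j T_k, where [P] denotes 1 if P holds and 0 otherwise. -/
/-- Telescoping identity (eq:T_identity_1):
`∑_{i ∈ ℤ \ I(k-j)} (-1)^{[i<0]} T_{j+i} T_{k-i} = -[j>k] T_j T_k`,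
where `I(k) = {min(0,k+1),...,max(0,k)}`. -/
theorem telescoping_identity_one (R : Type*) [CommRing R] (T : ℤ → R)
    (hT : (Function.support T).Finite) (j k : ℤ) :
    ∑ᶠ i ∈ {i : ℤ | i ∉ Finset.Icc (min 0 (k - j + 1)) (max 0 (k - j))},
      (-1 : R) ^ (if i < 0 then 1 else 0) * (T (j + i) * T (k - i))
    = -(if j > k then (1 : R) else 0) * (T j * T k) := by
  classical
  set c : ℤ := k - j with hc
  set S : Set ℤ := {i : ℤ | i ∉ Finset.Icc (min 0 (c + 1)) (max 0 c)} with hS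
  set g : ℤ → R := fun i => (-1 : R) ^ (if i < 0 then 1 else 0) * (T (j + i) * T (k - i))
    with hg
  have hsupp : (Function.support g).Finite := by
    have h1 : ((fun i : ℤ => j + i) ⁻¹' Function.support T).Finite :=
      hT.preimage ((add_right_injective j).injOn)
    refine h1.subset ?_
    intro i hi
    simp only [Function.mem_support, hg] at hi
    simp only [Set.mem_preimage, Function.mem_support]
    intro h0
    exact hi (by rw [h0]; ring)
  have hfin : (S ∩ Function.support g).Finite := hsupp.inter_of_right S
  rw [finsum_mem_eq_sum g hfin]
  set F : Finset ℤ := hfin.toFinset with hF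
  have hmemF : ∀ i : ℤ, i ∈ F ↔ (i ∈ S ∧ g i ≠ 0) := by
    intro i
    simp [hF, Set.Finite.mem_toFinset, Function.mem_support]
  have hmemS : ∀ i : ℤ, i ∈ S ↔ (i < min 0 (c + 1) ∨ max 0 c < i) := by
    intro i
    simp only [hS, Set.mem_setOf_eq, Finset.mem_Icc]
    omega
  -- key product fact
  have hprod : ∀ i : ℤ, T (j + (c - i)) * T (k - (c - i)) = T (j + i) * T (k - i) := by
    intro i
    have e1 : j + (c - i) = k - i := by omega
    have e2 : k - (c - i) = j + i := by omega
    rw [e1, e2]; ring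
  -- the involution cancels everything on F.erase c
  have hkey : ∑ x ∈ F.erase c, g x = 0 := by
    refine Finset.sum_involution (fun i _ => c - i) ?_ ?_ ?_ ?_
    · intro i hi
      have hiS' := (hmemS i).mp ((hmemF i).mp (Finset.mem_of_mem_erase hi)).1
      have hine : i ≠ c := Finset.ne_of_mem_erase hi
      show g i + g (c - i) = 0
      by_cases h : i < 0
      · have h2 : ¬ (c - i < 0) := by omega
        simp only [hg, hprod, if_pos h, if_neg h2, pow_one, pow_zero]
        ring
      · have h2 : c - i < 0 := by omega
        simp only [hg, hprod, if_neg h, if_pos h2, pow_one, pow_zero]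
        ring
    · intro i hi _
      have hiS' := (hmemS i).mp ((hmemF i).mp (Finset.mem_of_mem_erase hi)).1
      have hine : i ≠ c := Finset.ne_of_mem_erase hi
      show c - i ≠ i
      omega
    · intro i hi
      have hiS' := (hmemS i).mp ((hmemF i).mp (Finset.mem_of_mem_erase hi)).1
      have hine : i ≠ c := Finset.ne_of_mem_erase hi
      have hgi : g i ≠ 0 := ((hmemF i).mp (Finset.mem_of_mem_erase hi)).2
      refine Finset.mem_erase.mpr ⟨?_, (hmemF _).mpr ⟨(hmemS _).mpr ?_, ?_⟩⟩
      · show c - i ≠ c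
        omega
      · show c - i < min 0 (c + 1) ∨ max 0 c < c - i
        omega
      · show g (c - i) ≠ 0
        intro h0
        apply hgi
        by_cases h : i < 0
        · have h2 : ¬ (c - i < 0) := by omega
          simp only [hg, hprod, if_neg h2, pow_zero, one_mul] at h0
          simp only [hg, if_pos h, pow_one, neg_one_mul, h0, neg_zero]
        · have h2 : c - i < 0 := by omega
          simp only [hg, hprod, if_pos h2, pow_one, neg_one_mul, neg_eq_zero] at h0
          simp only [hg, if_neg h, pow_zero, one_mul, h0]
    · intro i hi
      show c - (c - i) = i
      omega
  have hsplit : ∑ x ∈ F, g x = (if c ∈ F then g c else 0) := by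
    by_cases h : c ∈ F
    · rw [if_pos h, ← Finset.add_sum_erase F g h, hkey, add_zero]
    · rw [if_neg h, ← hkey, Finset.erase_eq_of_notMem h]
  rw [hsplit]
  by_cases hjk : j > k
  · have hcneg : c < 0 := by omega
    have hgc : g c = -(T j * T k) := by
      have e1 : j + c = k := by omega
      have e2 : k - c = j := by omega
      simp [hg, hcneg, e1, e2]; ring
    rw [if_pos hjk]
    by_cases h0 : g c = 0
    · have hTjk : T j * T k = 0 := by
        rw [hgc, neg_eq_zero] at h0; exact h0
      rw [hTjk]
      split <;> simp [h0]
    · have hcF : c ∈ F := (hmemF c).mpr ⟨by rw [hmemS]; omega, h0⟩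
      rw [if_pos hcF, hgc]; ring
  · rw [if_neg hjk]
    have hcF : c ∉ F := by
      intro h
      have := ((hmemF c).mp h).1
      rw [hmemS] at this; omega
    rw [if_neg hcF]; ring
end

section
/- Let q be a nonzero element of a field K with q ≠ 1, and let A = K⟨x^{±1}, y | yx - qxy = 1⟩ be the localized q-Weyl algebra (x inverted). Then the map x ↦ x, y ↦ (qx - x)^{-1}(y - 1) defines a K-algebra isomorphism from A onto the localized quantum plane K⟨x^{±1}, y | yx = qxy⟩. -/
/-- Relations of the localized `q`-Weyl algebra `K⟨x^{±1}, y | yx - qxy = 1⟩`: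
generators `0 ↦ x`, `1 ↦ x⁻¹`, `2 ↦ y`. -/
inductive qWeylLocRel (K : Type*) [CommRing K] (q : K) :
    FreeAlgebra K (Fin 3) → FreeAlgebra K (Fin 3) → Prop
  | x_xinv : qWeylLocRel K q (FreeAlgebra.ι K 0 * FreeAlgebra.ι K 1) 1
  | xinv_x : qWeylLocRel K q (FreeAlgebra.ι K 1 * FreeAlgebra.ι K 0) 1
  | yx : qWeylLocRel K q (FreeAlgebra.ι K 2 * FreeAlgebra.ι K 0)
      (q • (FreeAlgebra.ι K 0 * FreeAlgebra.ι K 2) + 1)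

/-- Relations of the localized quantum plane `K⟨x^{±1}, y | yx = qxy⟩`:
generators `0 ↦ x`, `1 ↦ x⁻¹`, `2 ↦ y`. -/
inductive qPlaneLocRel (K : Type*) [CommRing K] (q : K) :
    FreeAlgebra K (Fin 3) → FreeAlgebra K (Fin 3) → Prop
  | x_xinv : qPlaneLocRel K q (FreeAlgebra.ι K 0 * FreeAlgebra.ι K 1) 1
  | xinv_x : qPlaneLocRel K q (FreeAlgebra.ι K 1 * FreeAlgebra.ι K 0) 1
  | yx : qPlaneLocRel K q (FreeAlgebra.ι K 2 * FreeAlgebra.ι K 0)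
      (q • (FreeAlgebra.ι K 0 * FreeAlgebra.ι K 2))

/-- For `q ∈ K \ {0,1}`, the map `x ↦ x`, `y ↦ (qx - x)⁻¹(y - 1) = (q-1)⁻¹ x⁻¹ (y - 1)`
is a `K`-algebra isomorphism from the localized `q`-Weyl algebra onto the localized
quantum plane. -/
theorem qWeyl_iso_qPlane (K : Type*) [Field K] (q : K) (hq0 : q ≠ 0) (hq1 : q ≠ 1) :
    ∃ f : RingQuot (qWeylLocRel K q) ≃ₐ[K] RingQuot (qPlaneLocRel K q),
      f (RingQuot.mkAlgHom K _ (FreeAlgebra.ι K 0)) =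
        RingQuot.mkAlgHom K _ (FreeAlgebra.ι K 0) ∧
      f (RingQuot.mkAlgHom K _ (FreeAlgebra.ι K 2)) =
        (q - 1)⁻¹ • (RingQuot.mkAlgHom K (qPlaneLocRel K q) (FreeAlgebra.ι K 1) *
          (RingQuot.mkAlgHom K _ (FreeAlgebra.ι K 2) - 1)) := by
  have h1 : q - 1 ≠ 0 := sub_ne_zero.mpr hq1
  set mkW := RingQuot.mkAlgHom K (qWeylLocRel K q) with hmkW
  set mkP := RingQuot.mkAlgHom K (qPlaneLocRel K q) with hmkP
  set X := mkP (FreeAlgebra.ι K 0) with hX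
  set Xi := mkP (FreeAlgebra.ι K 1) with hXi_
  set Y := mkP (FreeAlgebra.ι K 2) with hY
  set X' := mkW (FreeAlgebra.ι K 0) with hX'
  set Xi' := mkW (FreeAlgebra.ι K 1) with hXi'_
  set Y' := mkW (FreeAlgebra.ι K 2) with hY'
  have hXXi : X * Xi = 1 := by
    simpa using RingQuot.mkAlgHom_rel K (qPlaneLocRel.x_xinv (K := K) (q := q))
  have hXiX : Xi * X = 1 := by
    simpa using RingQuot.mkAlgHom_rel K (qPlaneLocRel.xinv_x (K := K) (q := q))
  have hYX : Y * X = q • (X * Y) := by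
    simpa using RingQuot.mkAlgHom_rel K (qPlaneLocRel.yx (K := K) (q := q))
  have hXXi' : X' * Xi' = 1 := by
    simpa using RingQuot.mkAlgHom_rel K (qWeylLocRel.x_xinv (K := K) (q := q))
  have hXiX' : Xi' * X' = 1 := by
    simpa using RingQuot.mkAlgHom_rel K (qWeylLocRel.xinv_x (K := K) (q := q))
  have hYX' : Y' * X' = q • (X' * Y') + 1 := by
    simpa using RingQuot.mkAlgHom_rel K (qWeylLocRel.yx (K := K) (q := q))
  let F : FreeAlgebra K (Fin 3) →ₐ[K] RingQuot (qPlaneLocRel K q) :=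
    FreeAlgebra.lift K ![X, Xi, (q - 1)⁻¹ • (Xi * (Y - 1))]
  let G : FreeAlgebra K (Fin 3) →ₐ[K] RingQuot (qWeylLocRel K q) :=
    FreeAlgebra.lift K ![X', Xi', (q - 1) • (X' * Y') + 1]
  have hF0 : F (FreeAlgebra.ι K 0) = X := by simp [F]
  have hF1 : F (FreeAlgebra.ι K 1) = Xi := by simp [F]
  have hF2 : F (FreeAlgebra.ι K 2) = (q - 1)⁻¹ • (Xi * (Y - 1)) := by simp [F]
  have hG0 : G (FreeAlgebra.ι K 0) = X' := by simp [G]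
  have hG1 : G (FreeAlgebra.ι K 1) = Xi' := by simp [G]
  have hG2 : G (FreeAlgebra.ι K 2) = (q - 1) • (X' * Y') + 1 := by simp [G]
  -- key noncommutative computations in the quantum plane
  have keyL : Xi * (Y - 1) * X = q • Y - 1 := by
    rw [mul_assoc, sub_mul, one_mul, hYX, mul_sub, mul_smul_comm, ← mul_assoc, hXiX, one_mul]
  have keyR : X * (Xi * (Y - 1)) = Y - 1 := by
    rw [← mul_assoc, hXXi, one_mul]
  have hFrel : ∀ ⦃a b⦄, qWeylLocRel K q a b → F a = F b := by
    intro a b h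
    induction h with
    | x_xinv => simp [hF0, hF1, hXXi]
    | xinv_x => simp [hF1, hF0, hXiX]
    | yx =>
      simp only [map_mul, map_add, map_smul, map_one, hF0, hF2]
      rw [smul_mul_assoc, keyL, mul_smul_comm, keyR]
      match_scalars <;> field_simp <;> ring
  have hGrel : ∀ ⦃a b⦄, qPlaneLocRel K q a b → G a = G b := by
    intro a b h
    induction h with
    | x_xinv => simp [hG0, hG1, hXXi']
    | xinv_x => simp [hG1, hG0, hXiX']
    | yx =>
      simp only [map_mul, map_smul, hG0, hG2]
      rw [add_mul, one_mul, smul_mul_assoc, mul_assoc, hYX', mul_add, mul_smul_comm, mul_one,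
        mul_add, mul_smul_comm, mul_one]
      match_scalars <;> ring
  let Φ : RingQuot (qWeylLocRel K q) →ₐ[K] RingQuot (qPlaneLocRel K q) :=
    RingQuot.liftAlgHom K ⟨F, hFrel⟩
  let Ψ : RingQuot (qPlaneLocRel K q) →ₐ[K] RingQuot (qWeylLocRel K q) :=
    RingQuot.liftAlgHom K ⟨G, hGrel⟩
  have hΦ : ∀ a, Φ (mkW a) = F a := fun a => RingQuot.liftAlgHom_mkAlgHom_apply K F hFrel a
  have hΨ : ∀ a, Ψ (mkP a) = G a := fun a => RingQuot.liftAlgHom_mkAlgHom_apply K G hGrel a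
  have hΨΦ : Ψ.comp Φ = AlgHom.id K _ := by
    apply RingQuot.ringQuot_ext'
    apply FreeAlgebra.hom_ext
    funext i
    fin_cases i
    · show Ψ (Φ X') = X'
      rw [hX', hΦ, hF0, hX, hΨ, hG0]
    · show Ψ (Φ Xi') = Xi'
      rw [hXi'_, hΦ, hF1, hXi_, hΨ, hG1]
    · show Ψ (Φ Y') = Y'
      rw [hY', hΦ, hF2, map_smul, map_mul, map_sub, map_one, hXi_, hY, hΨ, hΨ, hG1, hG2,
        add_sub_cancel_right, mul_smul_comm, inv_smul_smul₀ h1, ← mul_assoc, hXiX', one_mul]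
  have hΦΨ : Φ.comp Ψ = AlgHom.id K _ := by
    apply RingQuot.ringQuot_ext'
    apply FreeAlgebra.hom_ext
    funext i
    fin_cases i
    · show Φ (Ψ X) = X
      rw [hX, hΨ, hG0, hX', hΦ, hF0]
    · show Φ (Ψ Xi) = Xi
      rw [hXi_, hΨ, hG1, hXi'_, hΦ, hF1]
    · show Φ (Ψ Y) = Y
      rw [hY, hΨ, hG2, map_add, map_smul, map_mul, map_one, hX', hY', hΦ, hΦ, hF0, hF2,
        mul_smul_comm, keyR, smul_inv_smul₀ h1, sub_add_cancel]
  refine ⟨AlgEquiv.ofAlgHom Φ Ψ hΦΨ hΨΦ, ?_, ?_⟩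
  · show Φ (mkW (FreeAlgebra.ι K 0)) = _
    rw [hΦ, hF0]
  · show Φ (mkW (FreeAlgebra.ι K 2)) = _
    rw [hΦ, hF2]
end

section
/- Let K be a field and q_1,...,q_n ∈ K \ {0,1}. In the multiparameter quantized Weyl algebra A_n^{q̄,Λ}(K) with all λ_{ij} = 1, the elements z_i := 1 + ∑_{k=1}^i (q_k - 1) y_k x_k satisfy z_i z_j = z_j z_i for all i,j, and z_j y_i = y_i z_j if j < i while z_j y_i = q_i y_i z_j if j ≥ i. -/
/-!
Write `t_k = (q_k - 1) y_k x_k`, so that `z_i = z_{i-1} + t_i` and the last defining relation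
reads `x_i y_i - q_i y_i x_i = z_{i-1}`. From the cross relations, `t_k` commutes with `y_i`
and `x_i` when `k < i`, while for `k > i` it satisfies `t_k y_i = q_i y_i t_k` and
`x_i t_k = q_i t_k x_i`. Hence `z_{i-1}` commutes with `x_i, y_i`, and the defining relation
upgrades this to `z_i y_i = q_i y_i z_i` and `x_i z_i = q_i z_i x_i`; adding the later terms
keeps both relations for every `z_j` with `j ≥ i`. An element that `q`-commutes with `y` from
the left and with `x` from the right commutes with `y x`, so `z_j` commutes with every `t_i`,
`i ≤ j`, and therefore with `z_i`.
-/

open Finset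

def QCommute {K A : Type*} [SMul K A] [Mul A] (c : K) (a b : A) : Prop :=
  a * b = c • (b * a)

namespace QCommute

variable {K A ι : Type*} [CommSemiring K] [Semiring A] [Algebra K A] {c : K} {a b d : A}

theorem add_left (hab : QCommute c a b) (hdb : QCommute c d b) : QCommute c (a + d) b := by
  unfold QCommute at *
  rw [add_mul, hab, hdb, mul_add, smul_add]

theorem sum_left {s : Finset ι} {f : ι → A} (h : ∀ i ∈ s, QCommute c (f i) b) :
    QCommute c (∑ i ∈ s, f i) b := by
  unfold QCommute
  rw [sum_mul, mul_sum, smul_sum]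
  exact sum_congr rfl h

theorem add_right (hab : QCommute c a b) (had : QCommute c a d) : QCommute c a (b + d) := by
  unfold QCommute at *
  rw [mul_add, hab, had, add_mul, smul_add]

theorem sum_right {s : Finset ι} {f : ι → A} (h : ∀ i ∈ s, QCommute c a (f i)) :
    QCommute c a (∑ i ∈ s, f i) := by
  unfold QCommute
  rw [sum_mul, mul_sum, smul_sum]
  exact sum_congr rfl h

theorem smul_left (h : QCommute c a b) (r : K) : QCommute c (r • a) b := by
  unfold QCommute at *
  rw [smul_mul_assoc, h, mul_smul_comm, smul_comm]

theorem smul_right (h : QCommute c a b) (r : K) : QCommute c a (r • b) := by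
  unfold QCommute at *
  rw [mul_smul_comm, h, smul_mul_assoc, smul_comm]

theorem mul_left (hab : Commute a b) (hdb : QCommute c d b) : QCommute c (a * d) b := by
  unfold QCommute at *
  rw [mul_assoc, hdb, mul_smul_comm, ← mul_assoc, hab.eq, mul_assoc]

theorem mul_right (hab : Commute a b) (had : QCommute c a d) : QCommute c a (b * d) := by
  unfold QCommute at *
  rw [← mul_assoc, hab.eq, mul_assoc, had, mul_smul_comm, mul_assoc]

theorem commute_mul (hab : QCommute c a b) (hda : QCommute c d a) : Commute a (b * d) := by
  change a * (b * d) = b * d * a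
  rw [← mul_assoc, hab, mul_assoc, hda, smul_mul_assoc, mul_smul_comm, mul_assoc]

end QCommute

section Pivot

variable {K A : Type*} [CommRing K] [Ring A] [Algebra K A] {c : K} {w a b : A}

theorem qCommute_add_sub_one_smul_left (hw : Commute w b) (h : a * b - c • (b * a) = w) :
    QCommute c (w + (c - 1) • (b * a)) b := by
  have hab : a * b = w + c • (b * a) := by rw [← h, sub_add_cancel]
  calc (w + (c - 1) • (b * a)) * b = b * w + (c - 1) • (b * (a * b)) := by
        rw [add_mul, hw.eq, smul_mul_assoc, mul_assoc]
    _ = c • (b * (w + (c - 1) • (b * a))) := by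
        rw [hab]
        simp only [mul_add, mul_smul_comm, smul_add]
        module

theorem qCommute_add_sub_one_smul_right (hw : Commute a w) (h : a * b - c • (b * a) = w) :
    QCommute c a (w + (c - 1) • (b * a)) := by
  have hab : a * b = w + c • (b * a) := by rw [← h, sub_add_cancel]
  calc a * (w + (c - 1) • (b * a)) = w * a + (c - 1) • (a * b * a) := by
        rw [mul_add, hw.eq, mul_smul_comm, mul_assoc]
    _ = c • ((w + (c - 1) • (b * a)) * a) := by
        rw [hab]
        simp only [add_mul, smul_mul_assoc, smul_add, mul_assoc]
        module

end Pivot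

namespace QWeyl

variable {K A ι : Type*} [CommRing K] [Ring A] [Algebra K A]

def term (q : ι → K) (x y : ι → A) (k : ι) : A := (q k - 1) • (y k * x k)

section Term

variable [LT ι] {q : ι → K} {x y : ι → A}

theorem commute_term_y (hyy : ∀ i j, y i * y j = y j * y i)
    (hxy_lt : ∀ i j, i < j → x i * y j = y j * x i) {k i : ι} (hki : k < i) :
    Commute (term q x y k) (y i) :=
  (Commute.mul_left (hyy k i) (hxy_lt k i hki)).smul_left _

theorem qCommute_term_y (hyy : ∀ i j, y i * y j = y j * y i)
    (hxy_gt : ∀ i j, j < i → x i * y j = q j • (y j * x i)) {k i : ι} (hik : i < k) :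
    QCommute (q i) (term q x y k) (y i) :=
  (QCommute.mul_left (hyy k i) (hxy_gt k i hik)).smul_left _

theorem commute_x_term (hxx : ∀ i j, i < j → x i * x j = q i • (x j * x i))
    (hxy_gt : ∀ i j, j < i → x i * y j = q j • (y j * x i)) {k i : ι} (hki : k < i) :
    Commute (x i) (term q x y k) :=
  (QCommute.commute_mul (hxy_gt i k hki) (hxx k i hki)).smul_right _

theorem qCommute_x_term (hxx : ∀ i j, i < j → x i * x j = q i • (x j * x i))
    (hxy_lt : ∀ i j, i < j → x i * y j = y j * x i) {k i : ι} (hik : i < k) :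
    QCommute (q i) (x i) (term q x y k) :=
  (QCommute.mul_right (hxy_lt i k hik) (hxx i k hik)).smul_right _

end Term

variable [LinearOrder ι] [LocallyFiniteOrderBot ι]

def z (q : ι → K) (x y : ι → A) (i : ι) : A := 1 + ∑ k ∈ Iic i, term q x y k

/-- `z_{i-1}`, which is `1` at the least index. -/
def zBelow (q : ι → K) (x y : ι → A) (i : ι) : A := 1 + ∑ k ∈ Iio i, term q x y k

variable {q : ι → K} {x y : ι → A}

theorem z_eq_zBelow_add_term (i : ι) : z q x y i = zBelow q x y i + term q x y i := by
  rw [z, zBelow, ← sum_Iio_add_eq_sum_Iic, add_assoc]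

theorem z_eq_z_add_sum {i j : ι} (hij : i ≤ j) :
    z q x y j = z q x y i + ∑ k ∈ Iic j \ Iic i, term q x y k := by
  rw [z, z, ← sum_sdiff (Iic_subset_Iic.mpr hij)]
  abel

theorem lt_of_mem_Iic_sdiff_Iic {i j k : ι} (hk : k ∈ Iic j \ Iic i) : i < k := by
  simpa using (mem_sdiff.mp hk).2

theorem qCommute_z_y (hyy : ∀ i j, y i * y j = y j * y i)
    (hxy_lt : ∀ i j, i < j → x i * y j = y j * x i)
    (hxy_gt : ∀ i j, j < i → x i * y j = q j • (y j * x i))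
    (hxyi : ∀ i, x i * y i - q i • (y i * x i) = zBelow q x y i) {i j : ι} (hij : i ≤ j) :
    QCommute (q i) (z q x y j) (y i) := by
  have hzBelow : Commute (zBelow q x y i) (y i) :=
    (Commute.one_left _).add_left <|
      Commute.sum_left _ _ _ fun k hk => commute_term_y hyy hxy_lt (mem_Iio.mp hk)
  rw [z_eq_z_add_sum hij, z_eq_zBelow_add_term]
  exact (qCommute_add_sub_one_smul_left hzBelow (hxyi i)).add_left <|
    QCommute.sum_left fun k hk => qCommute_term_y hyy hxy_gt (lt_of_mem_Iic_sdiff_Iic hk)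

theorem qCommute_x_z (hxx : ∀ i j, i < j → x i * x j = q i • (x j * x i))
    (hxy_lt : ∀ i j, i < j → x i * y j = y j * x i)
    (hxy_gt : ∀ i j, j < i → x i * y j = q j • (y j * x i))
    (hxyi : ∀ i, x i * y i - q i • (y i * x i) = zBelow q x y i) {i j : ι} (hij : i ≤ j) :
    QCommute (q i) (x i) (z q x y j) := by
  have hzBelow : Commute (x i) (zBelow q x y i) :=
    (Commute.one_right _).add_right <|
      Commute.sum_right _ _ _ fun k hk => commute_x_term hxx hxy_gt (mem_Iio.mp hk)
  rw [z_eq_z_add_sum hij, z_eq_zBelow_add_term]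
  exact (qCommute_add_sub_one_smul_right hzBelow (hxyi i)).add_right <|
    QCommute.sum_right fun k hk => qCommute_x_term hxx hxy_lt (lt_of_mem_Iic_sdiff_Iic hk)

theorem commute_z_of_forall_commute_term {b : A} {i : ι}
    (h : ∀ k ≤ i, Commute (term q x y k) b) : Commute (z q x y i) b :=
  (Commute.one_left _).add_left <| Commute.sum_left _ _ _ fun k hk => h k (mem_Iic.mp hk)

theorem commute_z (hyy : ∀ i j, y i * y j = y j * y i)
    (hxx : ∀ i j, i < j → x i * x j = q i • (x j * x i))
    (hxy_lt : ∀ i j, i < j → x i * y j = y j * x i)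
    (hxy_gt : ∀ i j, j < i → x i * y j = q j • (y j * x i))
    (hxyi : ∀ i, x i * y i - q i • (y i * x i) = zBelow q x y i) (i j : ι) :
    Commute (z q x y i) (z q x y j) := by
  have hterm : ∀ {k j : ι}, k ≤ j → Commute (term q x y k) (z q x y j) := fun hkj =>
    ((qCommute_z_y hyy hxy_lt hxy_gt hxyi hkj).commute_mul
      (qCommute_x_z hxx hxy_lt hxy_gt hxyi hkj)).symm.smul_left _
  rcases le_total i j with hij | hji
  · exact commute_z_of_forall_commute_term fun _ hk => hterm (hk.trans hij)
  · exact (commute_z_of_forall_commute_term fun _ hk => hterm (hk.trans hji)).symm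

theorem commute_z_y (hyy : ∀ i j, y i * y j = y j * y i)
    (hxy_lt : ∀ i j, i < j → x i * y j = y j * x i) {i j : ι} (hji : j < i) :
    Commute (z q x y j) (y i) :=
  commute_z_of_forall_commute_term fun _ hk => commute_term_y hyy hxy_lt (hk.trans_lt hji)

end QWeyl

theorem multiparam_qWeyl_z_relations_general (K : Type*) [Field K] (n : ℕ)
    (q : Fin n → K)
    (A : Type*) [Ring A] [Algebra K A] (x y : Fin n → A)
    (hyy : ∀ i j, y i * y j = y j * y i)
    (hxx : ∀ i j, i < j → x i * x j = q i • (x j * x i))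
    (hxy_lt : ∀ i j, i < j → x i * y j = y j * x i)
    (hxy_gt : ∀ i j, j < i → x i * y j = q j • (y j * x i))
    (hxyi : ∀ i, x i * y i - q i • (y i * x i) =
      1 + ∑ k ∈ Finset.univ.filter (· < i), (q k - 1) • (y k * x k)) :
    let z : Fin n → A := fun i =>
      1 + ∑ k ∈ Finset.univ.filter (· ≤ i), (q k - 1) • (y k * x k)
    (∀ i j, z i * z j = z j * z i) ∧
      (∀ i j : Fin n, j < i → z j * y i = y i * z j) ∧
      (∀ i j : Fin n, i ≤ j → z j * y i = q i • (y i * z j)) := by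
  intro z
  have hz : z = QWeyl.z q x y := by
    funext i
    simp only [z, QWeyl.z, QWeyl.term, filter_ge_eq_Iic]
  have hxyi' : ∀ i, x i * y i - q i • (y i * x i) = QWeyl.zBelow q x y i := by
    simpa only [QWeyl.zBelow, QWeyl.term, filter_gt_eq_Iio] using hxyi
  rw [hz]
  exact ⟨QWeyl.commute_z hyy hxx hxy_lt hxy_gt hxyi', fun _ _ => QWeyl.commute_z_y hyy hxy_lt,
    fun _ _ => QWeyl.qCommute_z_y hyy hxy_lt hxy_gt hxyi'⟩

/-- In the multiparameter quantized Weyl algebra `A_n^{q̄,Λ}(K)` with all `λ_{ij} = 1`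
(presented here by its generators and relations inside any `K`-algebra `A`), the
elements `z_i = 1 + ∑_{k≤i} (q_k - 1) y_k x_k` commute with each other, commute with
`y_i` when `j < i`, and satisfy `z_j y_i = q_i y_i z_j` when `j ≥ i`. -/
theorem multiparam_qWeyl_z_relations (K : Type*) [Field K] (n : ℕ)
    (q : Fin n → K) (hq : ∀ i, q i ≠ 0 ∧ q i ≠ 1)
    (A : Type*) [Ring A] [Algebra K A] (x y : Fin n → A)
    (hyy : ∀ i j, y i * y j = y j * y i)
    (hxx : ∀ i j, i < j → x i * x j = q i • (x j * x i))
    (hxy_lt : ∀ i j, i < j → x i * y j = y j * x i)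
    (hxy_gt : ∀ i j, j < i → x i * y j = q j • (y j * x i))
    (hxyi : ∀ i, x i * y i - q i • (y i * x i) =
      1 + ∑ k ∈ Finset.univ.filter (· < i), (q k - 1) • (y k * x k)) :
    let z : Fin n → A := fun i =>
      1 + ∑ k ∈ Finset.univ.filter (· ≤ i), (q k - 1) • (y k * x k)
    (∀ i j, z i * z j = z j * z i) ∧
      (∀ i j : Fin n, j < i → z j * y i = y i * z j) ∧
      (∀ i j : Fin n, i ≤ j → z j * y i = q i • (y i * z j)) :=
  multiparam_qWeyl_z_relations_general K n q A x y hyy hxx hxy_lt hxy_gt hxyi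
end

section
/- Every skew-symmetric integer matrix S of even size 2n×2n is congruent over ℤ to a block diagonal matrix: there exists U ∈ GL_{2n}(ℤ) such that Uᵀ S U is the direct sum of n blocks [[0, k_i],[-k_i, 0]] for some integers k_1,...,k_n. -/
/-!
Congruence `S ↦ Uᵀ * S * U` by an integral shear `e_c ↦ e_c + f c • e_p + g c • e_q` adds
multiples of `S p q` to the entries of rows `p` and `q`, so those rows can be reduced modulo the
pivot `S p q`. A nonzero remainder, moved into the pivot position by a permutation, is a pivot of
smaller absolute value; this Euclidean descent ends with rows `p` and `q` vanishing outside the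
`2 × 2` block on `{p, q}`, so the matrix splits as that block plus a skew-symmetric matrix of size
`2n - 2`, to which induction applies.
-/

open Matrix

def finSuccProdEquiv (n : ℕ) (β : Type*) : Fin (n + 1) × β ≃ β ⊕ Fin n × β :=
  ((finSuccEquiv n).prodCongr (Equiv.refl β)).trans optionProdEquiv

@[simp]
theorem finSuccProdEquiv_zero (n : ℕ) {β : Type*} (b : β) :
    finSuccProdEquiv n β (0, b) = .inl b := by
  simp [finSuccProdEquiv]

@[simp]
theorem finSuccProdEquiv_succ {n : ℕ} {β : Type*} (i : Fin n) (b : β) :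
    finSuccProdEquiv n β (i.succ, b) = .inr (i, b) := by
  simp [finSuccProdEquiv]

namespace Matrix

theorem diag_eq_zero_of_transpose_eq_neg {ι : Type*} {S : Matrix ι ι ℤ} (hS : Sᵀ = -S) (i : ι) :
    S i i = 0 := by
  have := congrFun (congrFun hS i) i
  simp only [transpose_apply, neg_apply] at this
  omega

variable {ι κ R : Type*} [Fintype ι] [DecidableEq ι] [Fintype κ] [DecidableEq κ] [CommRing R]

def IsCongruent (S T : Matrix ι ι R) : Prop :=
  ∃ U : Matrix ι ι R, IsUnit U.det ∧ Uᵀ * S * U = T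

namespace IsCongruent

variable {S T V : Matrix ι ι R}

@[refl]
theorem refl (S : Matrix ι ι R) : IsCongruent S S := ⟨1, by simp, by simp⟩

@[trans]
theorem trans : IsCongruent S T → IsCongruent T V → IsCongruent S V := by
  rintro ⟨U, hU, rfl⟩ ⟨W, hW, rfl⟩
  exact ⟨U * W, by rw [det_mul]; exact hU.mul hW, by simp [transpose_mul, Matrix.mul_assoc]⟩

theorem transpose_eq_neg (h : IsCongruent S T) (hS : Sᵀ = -S) : Tᵀ = -T := by
  obtain ⟨U, -, rfl⟩ := h
  simp [transpose_mul, hS, Matrix.mul_assoc]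

theorem submatrix (h : IsCongruent S T) (e : κ ≃ ι) :
    IsCongruent (S.submatrix e e) (T.submatrix e e) := by
  obtain ⟨U, hU, rfl⟩ := h
  refine ⟨U.submatrix e e, by rwa [det_submatrix_equiv_self], ?_⟩
  rw [transpose_submatrix, submatrix_mul_equiv, submatrix_mul_equiv]

theorem fromBlocks_zero (A : Matrix κ κ R) (h : IsCongruent S T) :
    IsCongruent (fromBlocks A 0 0 S) (fromBlocks A 0 0 T) := by
  obtain ⟨U, hU, rfl⟩ := h
  refine ⟨fromBlocks 1 0 0 U, by simpa [det_fromBlocks_zero₂₁] using hU, ?_⟩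
  simp [fromBlocks_transpose, fromBlocks_multiply, Matrix.mul_assoc]

end IsCongruent

theorem isCongruent_submatrix_perm (S : Matrix ι ι R) (σ : Equiv.Perm ι) :
    IsCongruent S (S.submatrix σ σ) := by
  refine ⟨σ⁻¹.permMatrix R, ?_, ?_⟩
  · rw [det_permutation]
    exact (Units.isUnit _).map (Int.castRingHom R)
  · rw [transpose_permMatrix, inv_inv, PEquiv.toMatrix_toPEquiv_mul, PEquiv.mul_toMatrix_toPEquiv]
    rfl

theorem exists_isCongruent_shear (S : Matrix ι ι R) {p q : ι} {f g : ι → R}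
    (hfp : f p = 0) (hfq : f q = 0) (hgp : g p = 0) (hgq : g q = 0) :
    ∃ T, IsCongruent S T ∧ ∀ c,
      T p c = S p c + S p p * f c + S p q * g c ∧ T q c = S q c + S q p * f c + S q q * g c := by
  set N := vecMulVec (Pi.single p 1) f + vecMulVec (Pi.single q 1) g
  have hNN : N * N = 0 := by
    simp [N, add_mul, mul_add, vecMulVec_mul_vecMulVec, hfp, hfq, hgp, hgq]
  have hinv : (1 + N) * (1 - N) = 1 := by
    rw [show (1 + N) * (1 - N) = 1 - N * N by noncomm_ring, hNN, sub_zero]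
  have hNtrans : ∀ M : Matrix ι ι R, ∀ c, (Nᵀ * M) p c = 0 ∧ (Nᵀ * M) q c = 0 := by
    intro M c
    simp [N, add_mul, vecMulVec_mul, vecMulVec_apply, hfp, hfq, hgp, hgq]
  have hexpand : (1 + N)ᵀ * S * (1 + N) = S + S * N + Nᵀ * (S * (1 + N)) := by
    rw [transpose_add, transpose_one]
    noncomm_ring
  refine ⟨_, ⟨1 + N, isUnit_det_of_right_inverse hinv, rfl⟩, fun c => ?_⟩
  simp only [hexpand, add_apply, (hNtrans _ c).1, (hNtrans _ c).2, add_zero]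
  simp [N, mul_add, mul_vecMulVec, vecMulVec_apply, add_assoc]

section Int

variable {S : Matrix ι ι ℤ} {p q : ι}

theorem exists_isCongruent_rows_emod (hS : Sᵀ = -S) (p q : ι) :
    ∃ T, IsCongruent S T ∧
      ∀ c, c ≠ p → c ≠ q → T p c = S p c % S p q ∧ T q c = S q c % S p q := by
  obtain ⟨T, hST, hT⟩ := exists_isCongruent_shear S (p := p) (q := q)
    (f := fun c => if c = p ∨ c = q then 0 else S q c / S p q)
    (g := fun c => if c = p ∨ c = q then 0 else -(S p c / S p q))
    (by simp) (by simp) (by simp) (by simp)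
  refine ⟨T, hST, fun c hcp hcq => ?_⟩
  have hqp : S q p = -S p q := congrFun (congrFun hS p) q
  simp only [hT c, hcp, hcq, or_self, if_false, diag_eq_zero_of_transpose_eq_neg hS, hqp,
    Int.emod_def]
  constructor <;> ring

theorem exists_isCongruent_pivot_ne_zero (hS : Sᵀ = -S) (hpq : p ≠ q) {c : ι} (hcp : c ≠ p)
    (hcq : c ≠ q) (hc : S p c ≠ 0 ∨ S q c ≠ 0) :
    ∃ T, IsCongruent S T ∧ T p q ≠ 0 ∧ (T p q).natAbs ≤ max (S p c).natAbs (S q c).natAbs := by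
  rcases hc with hpc | hqc
  · refine ⟨_, isCongruent_submatrix_perm S (Equiv.swap q c), ?_⟩
    simp only [submatrix_apply, Equiv.swap_apply_left, Equiv.swap_apply_of_ne_of_ne hpq hcp.symm]
    exact ⟨hpc, le_max_left _ _⟩
  · refine ⟨_, isCongruent_submatrix_perm S (Equiv.swap p c), ?_⟩
    have hcq' : S c q = -S q c := congrFun (congrFun hS q) c
    simp only [submatrix_apply, Equiv.swap_apply_left,
      Equiv.swap_apply_of_ne_of_ne hpq.symm hcq.symm, hcq', neg_ne_zero, Int.natAbs_neg]
    exact ⟨hqc, le_max_right _ _⟩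

theorem exists_isCongruent_rows_eq_zero_of_pivot_ne_zero (hS : Sᵀ = -S) (hpq : p ≠ q)
    (hpivot : S p q ≠ 0) :
    ∃ T, IsCongruent S T ∧ ∀ c, c ≠ p → c ≠ q → T p c = 0 ∧ T q c = 0 := by
  induction h : (S p q).natAbs using Nat.strong_induction_on generalizing S with
  | _ m ih =>
  obtain ⟨T, hST, hT⟩ := exists_isCongruent_rows_emod hS p q
  by_cases hrows : ∀ c, c ≠ p → c ≠ q → T p c = 0 ∧ T q c = 0
  · exact ⟨T, hST, hrows⟩
  push Not at hrows
  obtain ⟨c, hcp, hcq, hc⟩ := hrows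
  obtain ⟨T', hTT', hT'pivot, hT'le⟩ :=
    exists_isCongruent_pivot_ne_zero (hST.transpose_eq_neg hS) hpq hcp hcq (by tauto)
  have hrem : ∀ x, (x % S p q).natAbs < m := fun x => by
    have := Int.emod_nonneg x hpivot
    have := Int.emod_lt x hpivot
    omega
  have hlt : (T' p q).natAbs < m := by
    refine hT'le.trans_lt (max_lt ?_ ?_)
    · rw [(hT c hcp hcq).1]; exact hrem _
    · rw [(hT c hcp hcq).2]; exact hrem _
  obtain ⟨T'', hT'T'', hT''⟩ :=
    ih _ hlt ((hST.trans hTT').transpose_eq_neg hS) hT'pivot rfl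
  exact ⟨T'', hST.trans (hTT'.trans hT'T''), hT''⟩

theorem exists_isCongruent_rows_eq_zero (hS : Sᵀ = -S) (hpq : p ≠ q) :
    ∃ T, IsCongruent S T ∧ ∀ c, c ≠ p → c ≠ q → T p c = 0 ∧ T q c = 0 := by
  by_cases hrows : ∀ c, c ≠ p → c ≠ q → S p c = 0 ∧ S q c = 0
  · exact ⟨S, .refl S, hrows⟩
  push Not at hrows
  obtain ⟨c, hcp, hcq, hc⟩ := hrows
  obtain ⟨T, hST, hTpivot, -⟩ := exists_isCongruent_pivot_ne_zero hS hpq hcp hcq (by tauto)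
  obtain ⟨T', hTT', hT'⟩ :=
    exists_isCongruent_rows_eq_zero_of_pivot_ne_zero (hST.transpose_eq_neg hS) hpq hTpivot
  exact ⟨T', hST.trans hTT', hT'⟩

end Int

def blockSkew {n : ℕ} (k : Fin n → ℤ) : Matrix (Fin n × Fin 2) (Fin n × Fin 2) ℤ :=
  of fun x y => if x.1 = y.1 then !![0, k x.1; -k x.1, 0] x.2 y.2 else 0

theorem blockSkew_cons {n : ℕ} (a : ℤ) (k : Fin n → ℤ) :
    blockSkew (Fin.cons a k) =
      (fromBlocks !![0, a; -a, 0] 0 0 (blockSkew k)).submatrix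
        (finSuccProdEquiv n _) (finSuccProdEquiv n _) := by
  ext ⟨i, x⟩ ⟨j, y⟩
  cases i using Fin.cases <;> cases j using Fin.cases <;>
    simp [blockSkew, Fin.succ_ne_zero, (Fin.succ_ne_zero _).symm]

theorem eq_submatrix_fromBlocks_of_rows_eq_zero {n : ℕ}
    {T : Matrix (Fin (n + 1) × Fin 2) (Fin (n + 1) × Fin 2) ℤ} (hT : Tᵀ = -T)
    (hrows : ∀ c, c ≠ (0, 0) → c ≠ (0, 1) → T (0, 0) c = 0 ∧ T (0, 1) c = 0) :
    T = (fromBlocks !![0, T (0, 0) (0, 1); -T (0, 0) (0, 1), 0] 0 0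
        (T.submatrix (Prod.map Fin.succ id) (Prod.map Fin.succ id))).submatrix
      (finSuccProdEquiv n _) (finSuccProdEquiv n _) := by
  have hskew : ∀ u v, T v u = -T u v := fun u v => congrFun (congrFun hT u) v
  have hrow : ∀ x (j : Fin n) y, T (0, x) (j.succ, y) = 0 := fun x j y => by
    have h := hrows (j.succ, y) (by simp [Fin.succ_ne_zero]) (by simp [Fin.succ_ne_zero])
    fin_cases x
    exacts [h.1, h.2]
  ext ⟨i, x⟩ ⟨j, y⟩
  cases i using Fin.cases with
  | zero =>
    cases j using Fin.cases with
    | zero =>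
      fin_cases x <;> fin_cases y <;>
        simp [hskew (0, 0) (0, 1), diag_eq_zero_of_transpose_eq_neg hT]
    | succ j => simp [hrow]
  | succ i =>
    cases j using Fin.cases with
    | zero => simp [hskew (0, y), hrow]
    | succ j => simp

theorem exists_isCongruent_blockSkew :
    ∀ {n : ℕ} (S : Matrix (Fin n × Fin 2) (Fin n × Fin 2) ℤ), Sᵀ = -S →
      ∃ k, IsCongruent S (blockSkew k)
  | 0, S, _ => ⟨Fin.elim0, by rw [Subsingleton.elim S (blockSkew _)]⟩
  | n + 1, S, hS => by
    obtain ⟨T, hST, hrows⟩ :=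
      exists_isCongruent_rows_eq_zero hS (p := (0, 0)) (q := (0, 1)) (by simp)
    have hT := hST.transpose_eq_neg hS
    obtain ⟨k, hk⟩ := exists_isCongruent_blockSkew
      (T.submatrix (Prod.map Fin.succ id) (Prod.map Fin.succ id))
      (by rw [transpose_submatrix, hT, submatrix_neg]; rfl)
    have hsplit := (hk.fromBlocks_zero !![0, T (0, 0) (0, 1); -T (0, 0) (0, 1), 0]).submatrix
      (finSuccProdEquiv n _)
    rw [← blockSkew_cons, ← eq_submatrix_fromBlocks_of_rows_eq_zero hT hrows] at hsplit
    exact ⟨_, hST.trans hsplit⟩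

end Matrix

/-- Skew normal form over ℤ: every skew-symmetric integer matrix of even size `2n × 2n`
(indexed here by `Fin n × Fin 2`) is congruent over ℤ to a block diagonal matrix with
`2 × 2` skew-symmetric blocks `[[0, kᵢ], [-kᵢ, 0]]`. -/
theorem skew_symmetric_int_matrix_normal_form (n : ℕ)
    (S : Matrix (Fin n × Fin 2) (Fin n × Fin 2) ℤ) (hS : Sᵀ = -S) :
    ∃ U : Matrix (Fin n × Fin 2) (Fin n × Fin 2) ℤ, IsUnit U.det ∧
      ∃ k : Fin n → ℤ, ∀ (i j : Fin n) (a b : Fin 2),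
        (Uᵀ * S * U) (i, a) (j, b) =
          if i = j then
            (if a = 0 ∧ b = 1 then k i else if a = 1 ∧ b = 0 then -(k i) else 0)
          else 0 := by
  obtain ⟨k, U, hU, hUSU⟩ := exists_isCongruent_blockSkew S hS
  refine ⟨U, hU, k, fun i j a b => ?_⟩
  rw [hUSU, blockSkew, of_apply]
  split_ifs <;> fin_cases a <;> fin_cases b <;> simp_all
end

section
/- Let K be a field of characteristic 0, q ∈ K nonzero, and let K_q(x̄,ȳ) be the skew field of fractions of the tensor product of n quantum planes K_q[x_i,y_i] (relations y_i x_j = q^{δ_{ij}} x_j y_i, [x_i,x_j] = [y_i,y_j] = 0), with S_n acting by simultaneously permuting the x_i and y_i. Define t_i ∈ K_q(x̄,ȳ) as the unique solutions of t_1 + x_i t_2 + ... + x_i^{n-1} t_n = y_i for i = 1,...,n. Then [t_i, t_j] = 0 for all i, j. -/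
/-!
The `x_i` and the scalars generate a commutative subfield `F` of `D`, over which the
Vandermonde system is inverted by Lagrange interpolation: `t_a = ∑_k ℓ_k[a] y_k`, with `ℓ_k`
the Lagrange basis polynomials of the nodes `x` and `ℓ_k[a]` the coefficient of `X^a`.
Conjugation by `y_i` is a ring endomorphism of `F` multiplying `x_i` by `q` and fixing the
other nodes, so moving `y_i` past `ℓ_k[b]` turns `ℓ_k` into the basis polynomial `ℓ_k^{(i)}`
for the nodes with `x_i` replaced by `q x_i`. Thus `t_a t_b = ∑_{i,k} ℓ_i[a] ℓ_k^{(i)}[b] y_i y_k`,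
and as the `y`'s commute it suffices that `ℓ_i[a] ℓ_k^{(i)}[b] + ℓ_k[a] ℓ_i^{(k)}[b]` is
symmetric in `a, b`. For `i = k` both factors share the numerator `∏_{j ≠ i} (X - x_j)`; for
`i ≠ k` all four polynomials are `∏_{j ≠ i,k} (X - x_j)` times a linear factor, and the symmetry
reduces to an identity between rational functions of two nodes and their twisted values.
-/

open Polynomial Finset

namespace Subfield

variable {D : Type*} [DivisionRing D]

theorem closure_subset_centralizer_centralizer (s : Set D) :
    (closure s : Set D) ⊆ Set.centralizer (Set.centralizer s) := fun _ ha =>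
  closure_induction (fun _ hs => Set.subset_centralizer_centralizer hs) Set.one_mem_centralizer
    (fun _ _ _ _ => Set.add_mem_centralizer) (fun _ _ => Set.neg_mem_centralizer)
    (fun _ _ => Set.inv_mem_centralizer₀) (fun _ _ _ _ => Set.mul_mem_centralizer) ha

abbrev closureFieldOfComm {s : Set D} (hs : ∀ a ∈ s, ∀ b ∈ s, a * b = b * a) :
    Field (closure s) where
  mul_comm a b := Subtype.ext <| Set.centralizer_centralizer_comm_of_comm hs _
    (closure_subset_centralizer_centralizer s a.2) _ (closure_subset_centralizer_centralizer s b.2)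

def restrictConj {s : Set D} (y : D) (hy : y ≠ 0) (hs : ∀ a ∈ s, y * a * y⁻¹ ∈ closure s) :
    closure s →+* closure s :=
  let φ := MulSemiringAction.toRingHom (ConjAct Dˣ) D (ConjAct.toConjAct (Units.mk0 y hy))
  φ.restrict _ _ fun _ ha => (closure_le (t := (closure s).comap φ)).mpr
    (fun a ha => by simpa [φ, ConjAct.units_smul_def] using hs a ha) ha

@[simp]
theorem coe_restrictConj {s : Set D} (y : D) (hy : y ≠ 0)
    (hs : ∀ a ∈ s, y * a * y⁻¹ ∈ closure s) (a : closure s) :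
    (restrictConj y hy hs a : D) = y * a * y⁻¹ :=
  ConjAct.units_smul_def _ _

theorem mul_eq_restrictConj_mul {s : Set D} (y : D) (hy : y ≠ 0)
    (hs : ∀ a ∈ s, y * a * y⁻¹ ∈ closure s) (a : closure s) :
    y * a = restrictConj y hy hs a * y := by
  simp [mul_assoc, hy]

end Subfield

section ClosureWithScalars

variable {K D : Type*} [Field K] [DivisionRing D] [Algebra K D] {κ : Type*} {x : κ → D}

theorem mul_comm_of_mem_range_union_range (hxx : ∀ i j, x i * x j = x j * x i) :
    ∀ a ∈ Set.range x ∪ Set.range (algebraMap K D),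
      ∀ b ∈ Set.range x ∪ Set.range (algebraMap K D), a * b = b * a := by
  rintro _ (⟨i, rfl⟩ | ⟨r, rfl⟩) _ (⟨j, rfl⟩ | ⟨r', rfl⟩)
  · exact hxx i j
  · exact (Algebra.commutes r' (x i)).symm
  · exact Algebra.commutes r (x j)
  · exact Algebra.commutes r _

theorem conj_mem_closure_range_union_range {y : D} (hy : y ≠ 0) {c : κ → K}
    (hc : ∀ j, y * x j * y⁻¹ = algebraMap K D (c j) * x j) :
    ∀ a ∈ Set.range x ∪ Set.range (algebraMap K D),
      y * a * y⁻¹ ∈ Subfield.closure (Set.range x ∪ Set.range (algebraMap K D)) := by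
  rintro _ (⟨j, rfl⟩ | ⟨r, rfl⟩)
  · rw [hc j]
    exact mul_mem (Subfield.subset_closure (.inr ⟨c j, rfl⟩))
      (Subfield.subset_closure (.inl ⟨j, rfl⟩))
  · rw [← Algebra.commutes, mul_assoc, mul_inv_cancel₀ hy, mul_one]
    exact Subfield.subset_closure (.inr ⟨r, rfl⟩)

end ClosureWithScalars

namespace Lagrange

variable {F : Type*} [Field F] {ι : Type*}

theorem prod_basisDivisor (a : F) (t : Finset ι) (v : ι → F) :
    ∏ j ∈ t, basisDivisor a (v j) = C (∏ j ∈ t, (a - v j))⁻¹ * nodal t v := by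
  simp only [basisDivisor, prod_mul_distrib, nodal_eq, ← map_prod, prod_inv_distrib]

variable [DecidableEq ι]

theorem map_basis {F' : Type*} [Field F'] (φ : F →+* F') (s : Finset ι) (v : ι → F) (i : ι) :
    (Lagrange.basis s v i).map φ = Lagrange.basis s (φ ∘ v) i := by
  simp [Lagrange.basis, basisDivisor, Polynomial.map_prod]

theorem basis_eq_basisDivisor_mul_prod {s : Finset ι} {v : ι → F} {i k : ι} (hik : i ≠ k)
    (hk : k ∈ s) : Lagrange.basis s v i =
      basisDivisor (v i) (v k) * ∏ j ∈ (s.erase i).erase k, basisDivisor (v i) (v j) :=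
  (mul_prod_erase _ _ (mem_erase.mpr ⟨hik.symm, hk⟩)).symm

theorem coeff_basisDivisor_mul (a b : F) (f : F[X]) (m : ℕ) :
    (basisDivisor a b * f).coeff m = (a - b)⁻¹ * ((X * f).coeff m - b * f.coeff m) := by
  rw [basisDivisor, mul_assoc, coeff_C_mul, sub_mul, coeff_sub, coeff_C_mul]

theorem sum_pow_mul_coeff_basis {s : Finset ι} {v : ι → F} (hvs : Set.InjOn v s) {l : ℕ}
    (hl : l < #s) (m : ℕ) :
    ∑ i ∈ s, v i ^ l * (Lagrange.basis s v i).coeff m = if m = l then 1 else 0 := by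
  have hdeg : (X ^ l : F[X]).degree < #s := by
    rw [degree_X_pow]; exact_mod_cast hl
  have := congrArg (coeff · m) (eq_interpolate hvs hdeg)
  simpa only [interpolate_apply, finsetSum_coeff, eval_pow, eval_X, coeff_C_mul, coeff_X_pow]
    using this.symm

theorem basis_update_eq_basisDivisor_mul_prod {s : Finset ι} {v : ι → F} {i k : ι} (hik : i ≠ k)
    (hi : i ∈ s) (c : F) : Lagrange.basis s (Function.update v i c) k =
      basisDivisor (v k) c * ∏ j ∈ (s.erase i).erase k, basisDivisor (v k) (v j) := by
  rw [basis_eq_basisDivisor_mul_prod hik.symm hi, Function.update_self,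
    Function.update_of_ne hik.symm, erase_right_comm]
  congr 1
  exact prod_congr rfl fun j hj => by
    rw [Function.update_of_ne (ne_of_mem_erase (mem_of_mem_erase hj))]

theorem coeff_basis_mul_coeff_basis_update_comm (s : Finset ι) (v : ι → F) (i : ι) (c : F)
    (a b : ℕ) :
    (Lagrange.basis s v i).coeff a * (Lagrange.basis s (Function.update v i c) i).coeff b =
      (Lagrange.basis s v i).coeff b * (Lagrange.basis s (Function.update v i c) i).coeff a := by
  have hupd :
      Lagrange.basis s (Function.update v i c) i = ∏ j ∈ s.erase i, basisDivisor c (v j) :=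
    prod_congr rfl fun j hj => by
      rw [Function.update_self, Function.update_of_ne (ne_of_mem_erase hj)]
  rw [hupd, Lagrange.basis, prod_basisDivisor, prod_basisDivisor]
  simp only [coeff_C_mul]
  ring

theorem coeff_basis_mul_coeff_basis_update_add_swap {s : Finset ι} {v : ι → F} {i k : ι}
    (hi : i ∈ s) (hk : k ∈ s) (hv : v i ≠ v k) {c c' : F} (hc : v k ≠ c) (hc' : v i ≠ c')
    (a b : ℕ) :
    (Lagrange.basis s v i).coeff a * (Lagrange.basis s (Function.update v i c) k).coeff b +
        (Lagrange.basis s v k).coeff a * (Lagrange.basis s (Function.update v k c') i).coeff b =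
      (Lagrange.basis s v i).coeff b * (Lagrange.basis s (Function.update v i c) k).coeff a +
        (Lagrange.basis s v k).coeff b * (Lagrange.basis s (Function.update v k c') i).coeff a := by
  have hik : i ≠ k := ne_of_apply_ne v hv
  rw [basis_update_eq_basisDivisor_mul_prod hik hi,
    basis_update_eq_basisDivisor_mul_prod hik.symm hk, basis_eq_basisDivisor_mul_prod hik hk,
    basis_eq_basisDivisor_mul_prod hik.symm hi,
    erase_right_comm]
  simp only [prod_basisDivisor, mul_left_comm (basisDivisor _ _), coeff_C_mul,
    coeff_basisDivisor_mul]
  set N := nodal ((s.erase k).erase i) v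
  have hlinear : ∀ u u' w w' : F,
      (v i - v k)⁻¹ * (u - v k * u') * ((v k - c)⁻¹ * (w - c * w')) +
          (v k - v i)⁻¹ * (u - v i * u') * ((v i - c')⁻¹ * (w - c' * w')) =
        (v i - v k)⁻¹ * (w - v k * w') * ((v k - c)⁻¹ * (u - c * u')) +
          (v k - v i)⁻¹ * (w - v i * w') * ((v i - c')⁻¹ * (u - c' * u')) := by
    intro u u' w w'
    have h1 : v i - v k ≠ 0 := sub_ne_zero.mpr hv
    have h2 : v k - c ≠ 0 := sub_ne_zero.mpr hc
    have h3 : v i - c' ≠ 0 := sub_ne_zero.mpr hc'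
    rw [← neg_sub (v i) (v k), inv_neg]
    field_simp
    ring
  linear_combination (∏ j ∈ (s.erase k).erase i, (v i - v j))⁻¹ *
    (∏ j ∈ (s.erase k).erase i, (v k - v j))⁻¹ *
      hlinear ((X * N).coeff a) (N.coeff a) ((X * N).coeff b) (N.coeff b)

end Lagrange

theorem Finset.sum_sum_eq_of_add_swap {ι M : Type*} [DecidableEq ι] [AddCommMonoid M]
    (s : Finset ι) {f g : ι → ι → M} (hdiag : ∀ i ∈ s, f i i = g i i)
    (hoff : ∀ i ∈ s, ∀ k ∈ s, i ≠ k → f i k + f k i = g i k + g k i) :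
    ∑ i ∈ s, ∑ k ∈ s, f i k = ∑ i ∈ s, ∑ k ∈ s, g i k := by
  induction s using Finset.induction_on with
  | empty => rfl
  | @insert a s ha ih =>
    have expand : ∀ h : ι → ι → M, ∑ i ∈ insert a s, ∑ k ∈ insert a s, h i k =
        h a a + ∑ k ∈ s, (h a k + h k a) + ∑ i ∈ s, ∑ k ∈ s, h i k := by
      intro h
      simp only [sum_insert ha, sum_add_distrib]
      abel
    rw [expand f, expand g, hdiag a (mem_insert_self a s),
      sum_congr rfl fun k hk => hoff a (mem_insert_self a s) k (mem_insert_of_mem hk)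
        (ne_of_mem_of_not_mem hk ha).symm,
      ih (fun i hi => hdiag i (mem_insert_of_mem hi))
        (fun i hi k hk => hoff i (mem_insert_of_mem hi) k (mem_insert_of_mem hk))]

section VandermondeSolution

variable {F D : Type*} [Field F] [DivisionRing D] (ι : F →+* D)

theorem eq_sum_map_coeff_basis_mul {n : ℕ} {χ : Fin n → F} (hχ : Function.Injective χ)
    {y t : Fin n → D} (ht : ∀ i, ∑ j : Fin n, ι (χ i) ^ (j : ℕ) * t j = y i) (j : Fin n) :
    t j = ∑ k, ι ((Lagrange.basis univ χ k).coeff j) * y k := by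
  have hδ : ∀ l : Fin n, ∑ k, (Lagrange.basis univ χ k).coeff j * χ k ^ (l : ℕ) =
      if j = l then 1 else 0 := fun l => by
    simp_rw [mul_comm _ (χ _ ^ _),
      Lagrange.sum_pow_mul_coeff_basis (s := univ) hχ.injOn (l := l) (by simp) j, Fin.val_inj]
  calc t j = ∑ l : Fin n, ι (∑ k, (Lagrange.basis univ χ k).coeff j * χ k ^ (l : ℕ)) * t l := by
        simp [hδ]
    _ = ∑ k, ι ((Lagrange.basis univ χ k).coeff j) * y k := by
        simp only [← ht, mul_sum, map_sum, sum_mul, map_mul, map_pow, mul_assoc]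
        exact sum_comm

theorem mul_map_coeff_basis_of_conj {κ : Type*} [DecidableEq κ] {σ : F →+* F} {Y : D}
    (hY : ∀ a, Y * ι a = ι (σ a) * Y) (s : Finset κ) (v : κ → F) (k : κ) (m : ℕ) :
    Y * ι ((Lagrange.basis s v k).coeff m) = ι ((Lagrange.basis s (σ ∘ v) k).coeff m) * Y := by
  rw [hY, ← coeff_map, Lagrange.map_basis]

theorem ne_mul_of_map_eq_mul {σ : F →+* F} {q a b : F} (hq : q ≠ 0) (hσq : σ q = q)
    (ha : σ a = q * a) (hb : σ b = b) (hab : a ≠ b) : b ≠ q * a := by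
  intro h
  have hqb : (q - 1) * b = 0 := by
    have : b = q * b :=
      calc b = σ (q * a) := by rw [← h, hb]
        _ = q * b := by rw [map_mul, hσq, ha, h]
    linear_combination -this
  rcases mul_eq_zero.mp hqb with hq1 | hb0
  · exact hab (by rw [h, sub_eq_zero.mp hq1, one_mul])
  · have ha0 : a = 0 := (mul_eq_zero.mp (h.symm.trans hb0)).resolve_left hq
    exact hab (ha0.trans hb0.symm)

theorem mul_eq_sum_sum_of_mul_map_coeff_basis {n : ℕ} {χ : Fin n → F}
    (hχ : Function.Injective χ) {χ' : Fin n → Fin n → F} {y t : Fin n → D}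
    (ht : ∀ i, ∑ j : Fin n, ι (χ i) ^ (j : ℕ) * t j = y i)
    (hy : ∀ i k (m : ℕ), y i * ι ((Lagrange.basis univ χ k).coeff m) =
      ι ((Lagrange.basis univ (χ' i) k).coeff m) * y i) (a b : Fin n) :
    t a * t b = ∑ i, ∑ k, ι ((Lagrange.basis univ χ i).coeff a *
      (Lagrange.basis univ (χ' i) k).coeff b) * (y i * y k) := by
  rw [eq_sum_map_coeff_basis_mul ι hχ ht a, sum_mul]
  refine sum_congr rfl fun i _ => ?_
  rw [eq_sum_map_coeff_basis_mul ι hχ ht b, mul_sum]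
  refine sum_congr rfl fun k _ => ?_
  rw [mul_assoc, ← mul_assoc (y i), hy, map_mul]
  simp only [mul_assoc]

theorem commute_of_sum_pow_mul_eq {n : ℕ} {χ : Fin n → F} (hχ : Function.Injective χ) {q : F}
    (hq : q ≠ 0) {y t : Fin n → D} (hyy : ∀ i j, y i * y j = y j * y i)
    (hconj : ∀ i, y i ≠ 0 → ∃ σ : F →+* F, σ q = q ∧ σ ∘ χ = Function.update χ i (q * χ i) ∧
      ∀ a, y i * ι a = ι (σ a) * y i)
    (ht : ∀ i, ∑ j : Fin n, ι (χ i) ^ (j : ℕ) * t j = y i) (a b : Fin n) :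
    t a * t b = t b * t a := by
  have htwist : ∀ i k (m : ℕ), y i * ι ((Lagrange.basis univ χ k).coeff m) =
      ι ((Lagrange.basis univ (Function.update χ i (q * χ i)) k).coeff m) * y i := by
    intro i k m
    by_cases hyi : y i = 0
    · simp [hyi]
    obtain ⟨σ, -, hσχ, hσ⟩ := hconj i hyi
    rw [mul_map_coeff_basis_of_conj ι hσ, hσχ]
  have hne : ∀ i k, i ≠ k → y i ≠ 0 → χ k ≠ q * χ i := by
    intro i k hik hyi
    obtain ⟨σ, hσq, hσχ, -⟩ := hconj i hyi
    refine ne_mul_of_map_eq_mul hq hσq ?_ ?_ (hχ.ne hik)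
    · rw [← Function.comp_apply (f := σ), hσχ, Function.update_self]
    · rw [← Function.comp_apply (f := σ), hσχ, Function.update_of_ne hik.symm]
  rw [mul_eq_sum_sum_of_mul_map_coeff_basis ι hχ ht htwist,
    mul_eq_sum_sum_of_mul_map_coeff_basis ι hχ ht htwist]
  refine sum_sum_eq_of_add_swap _ (fun i _ => ?_) (fun i _ k _ hik => ?_)
  · rw [Lagrange.coeff_basis_mul_coeff_basis_update_comm]
  by_cases hy0 : y i = 0 ∨ y k = 0
  · rcases hy0 with h | h <;> simp [h]
  push Not at hy0
  simp only [hyy k i, ← add_mul, ← map_add]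
  rw [Lagrange.coeff_basis_mul_coeff_basis_update_add_swap (mem_univ i) (mem_univ k) (hχ.ne hik)
    (hne i k hik hy0.1) (hne k i (Ne.symm hik) hy0.2)]

end VandermondeSolution

theorem t_elements_commute_general (K : Type*) [Field K] (q : K) (hq : q ≠ 0)
    (D : Type*) [DivisionRing D] [Algebra K D] (n : ℕ) (x y : Fin n → D)
    (hxx : ∀ i j, x i * x j = x j * x i)
    (hyy : ∀ i j, y i * y j = y j * y i)
    (hyx : ∀ i j, y i * x j = (if i = j then q else 1) • (x j * y i))
    (hx : Function.Injective x)
    (t : Fin n → D) (ht : ∀ i, ∑ j : Fin n, x i ^ (j : ℕ) * t j = y i) :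
    ∀ i j, t i * t j = t j * t i := by
  set s : Set D := Set.range x ∪ Set.range (algebraMap K D)
  let _ : Field (Subfield.closure s) :=
    Subfield.closureFieldOfComm (mul_comm_of_mem_range_union_range hxx)
  have hconj : ∀ i, y i ≠ 0 → ∀ j,
      y i * x j * (y i)⁻¹ = algebraMap K D (if i = j then q else 1) * x j := by
    intro i hyi j
    rw [hyx, Algebra.smul_def, mul_assoc, mul_assoc, mul_inv_cancel₀ hyi, mul_one]
  let χ : Fin n → Subfield.closure s := fun j => ⟨x j, Subfield.subset_closure (.inl ⟨j, rfl⟩)⟩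
  let qF : Subfield.closure s := ⟨algebraMap K D q, Subfield.subset_closure (.inr ⟨q, rfl⟩)⟩
  refine commute_of_sum_pow_mul_eq (Subfield.closure s).subtype (χ := χ) (q := qF)
    (fun i j h => hx (congrArg Subtype.val h)) (fun h => hq ?_) hyy (fun i hyi =>
      have hs := conj_mem_closure_range_union_range hyi (hconj i hyi)
      ⟨Subfield.restrictConj (y i) hyi hs, ?_, ?_,
        Subfield.mul_eq_restrictConj_mul (y i) hyi hs⟩) ht
  · simpa [qF] using congrArg Subtype.val h
  · ext
    simp [qF, ← Algebra.commutes q, hyi]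
  · ext j
    by_cases hij : i = j
    · subst hij
      simp [χ, qF, hconj i hyi]
    · simp [χ, hconj i hyi, Function.update_of_ne (Ne.symm hij), hij]

/-- Proposition (prp:tcommutes): in the skew field of fractions of the tensor product of
`n` quantum planes (relations `y_i x_j = q^{δ_{ij}} x_j y_i`, all `x`'s commuting and all
`y`'s commuting), the unique solutions `t_1,…,t_n` of the Vandermonde system
`t_1 + x_i t_2 + ⋯ + x_i^{n-1} t_n = y_i` pairwise commute. -/
theorem t_elements_commute (K : Type*) [Field K] [CharZero K] (q : K) (hq : q ≠ 0)
    (D : Type*) [DivisionRing D] [Algebra K D] (n : ℕ) (x y : Fin n → D)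
    (hxx : ∀ i j, x i * x j = x j * x i)
    (hyy : ∀ i j, y i * y j = y j * y i)
    (hyx : ∀ i j, y i * x j = (if i = j then q else 1) • (x j * y i))
    (hx : Function.Injective x)
    (t : Fin n → D) (ht : ∀ i, ∑ j : Fin n, x i ^ (j : ℕ) * t j = y i) :
    ∀ i j, t i * t j = t j * t i :=
  t_elements_commute_general K q hq D n x y hxx hyy hyx hx t ht
end

section
/- In the setting of n quantum planes as above (n = 2), with t_1 = (x_1-x_2)^{-1}(x_1 y_2 - x_2 y_1) and t_2 = -(x_1-x_2)^{-1}(y_2 - y_1), e_1 = x_1 + x_2, e_2 = x_1 x_2, the following relations hold in the skew field K_q(x_1,x_2,y_1,y_2): t_1 t_2 = t_2 t_1, t_1 e_2 = q e_2 t_1, t_2 e_2 = q e_2 t_2, t_1 e_1 = e_1 t_1 + (1-q) e_2 t_2, and t_2 e_1 = q e_1 t_2 + (q-1) t_1. -/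
set_option maxHeartbeats 1000000 in
/-- The `n = 2` case: with `t_1 = (x_1-x_2)⁻¹(x_1 y_2 - x_2 y_1)`,
`t_2 = -(x_1-x_2)⁻¹(y_2 - y_1)`, `e_1 = x_1 + x_2`, `e_2 = x_1 x_2`, the relations
`t_1 t_2 = t_2 t_1`, `t_1 e_2 = q e_2 t_1`, `t_2 e_2 = q e_2 t_2`,
`t_1 e_1 = e_1 t_1 + (1-q) e_2 t_2`, `t_2 e_1 = q e_1 t_2 + (q-1) t_1` hold. -/
theorem two_quantum_planes_t_e_relations (K : Type*) [Field K] [CharZero K]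
    (q : K) (hq : q ≠ 0) (D : Type*) [DivisionRing D] [Algebra K D]
    (x₁ x₂ y₁ y₂ : D)
    (hxx : x₁ * x₂ = x₂ * x₁) (hyy : y₁ * y₂ = y₂ * y₁)
    (h11 : y₁ * x₁ = q • (x₁ * y₁)) (h22 : y₂ * x₂ = q • (x₂ * y₂))
    (h12 : y₁ * x₂ = x₂ * y₁) (h21 : y₂ * x₁ = x₁ * y₂)
    (hne : x₁ ≠ x₂) :
    let t₁ : D := (x₁ - x₂)⁻¹ * (x₁ * y₂ - x₂ * y₁)
    let t₂ : D := -((x₁ - x₂)⁻¹ * (y₂ - y₁))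
    let e₁ : D := x₁ + x₂
    let e₂ : D := x₁ * x₂
    t₁ * t₂ = t₂ * t₁ ∧
      t₁ * e₂ = q • (e₂ * t₁) ∧
      t₂ * e₂ = q • (e₂ * t₂) ∧
      t₁ * e₁ = e₁ * t₁ + (1 - q) • (e₂ * t₂) ∧
      t₂ * e₁ = q • (e₁ * t₂) + (q - 1) • t₁ := by
  intro t₁ t₂ e₁ e₂
  have ht₁ : t₁ = (x₁ - x₂)⁻¹ * (x₁ * y₂ - x₂ * y₁) := rfl
  have ht₂ : t₂ = -((x₁ - x₂)⁻¹ * (y₂ - y₁)) := rfl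
  have he₁ : e₁ = x₁ + x₂ := rfl
  have he₂ : e₂ = x₁ * x₂ := rfl
  set c : D := algebraMap K D q with hc
  set d : D := x₁ - x₂ with hdd
  have hd : d ≠ 0 := sub_ne_zero.mpr hne
  -- c-form hypotheses
  have h11c : y₁ * x₁ = c * (x₁ * y₁) := by rw [h11, Algebra.smul_def, hc]
  have h22c : y₂ * x₂ = c * (x₂ * y₂) := by rw [h22, Algebra.smul_def, hc]
  have hxx' : x₂ * x₁ = x₁ * x₂ := hxx.symm
  have hcen : ∀ z : D, z * c = c * z := fun z => by rw [hc]; exact (Algebra.commutes q z).symm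
  -- lifted commuting lemmas
  have hA' : ∀ z : D, y₁ * (x₁ * z) = c * (x₁ * (y₁ * z)) := fun z => by
    rw [← mul_assoc, h11c, mul_assoc, mul_assoc]
  have hB' : ∀ z : D, y₂ * (x₂ * z) = c * (x₂ * (y₂ * z)) := fun z => by
    rw [← mul_assoc, h22c, mul_assoc, mul_assoc]
  have hC' : ∀ z : D, y₁ * (x₂ * z) = x₂ * (y₁ * z) := fun z => by
    rw [← mul_assoc, h12, mul_assoc]
  have hD' : ∀ z : D, y₂ * (x₁ * z) = x₁ * (y₂ * z) := fun z => by
    rw [← mul_assoc, h21, mul_assoc]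
  have hE' : ∀ z : D, x₂ * (x₁ * z) = x₁ * (x₂ * z) := fun z => by
    rw [← mul_assoc, hxx', mul_assoc]
  have hcx1 : ∀ z : D, x₁ * (c * z) = c * (x₁ * z) := fun z => by
    rw [← mul_assoc, hcen x₁, mul_assoc]
  have hcx2 : ∀ z : D, x₂ * (c * z) = c * (x₂ * z) := fun z => by
    rw [← mul_assoc, hcen x₂, mul_assoc]
  -- commuting with d⁻¹
  have cinv : ∀ z : D, z * d = d * z → z * d⁻¹ = d⁻¹ * z := by
    intro z h
    have h1 : z * d⁻¹ = d⁻¹ * ((d * z) * d⁻¹) := by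
      rw [← mul_assoc, ← mul_assoc, inv_mul_cancel₀ hd, one_mul]
    rw [h1, ← h, mul_assoc z d d⁻¹, mul_inv_cancel₀ hd, mul_one]
  have hx1d : x₁ * d⁻¹ = d⁻¹ * x₁ := by
    refine cinv x₁ ?_
    rw [hdd, mul_sub, sub_mul, hxx]
  have hx2d : x₂ * d⁻¹ = d⁻¹ * x₂ := by
    refine cinv x₂ ?_
    rw [hdd, mul_sub, sub_mul, hxx]
  have hcd : c * d⁻¹ = d⁻¹ * c := cinv c (hcen d).symm
  have hx1d' : ∀ z : D, x₁ * (d⁻¹ * z) = d⁻¹ * (x₁ * z) := fun z => by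
    rw [← mul_assoc, hx1d, mul_assoc]
  have hx2d' : ∀ z : D, x₂ * (d⁻¹ * z) = d⁻¹ * (x₂ * z) := fun z => by
    rw [← mul_assoc, hx2d, mul_assoc]
  have hcd' : ∀ z : D, c * (d⁻¹ * z) = d⁻¹ * (c * z) := fun z => by
    rw [← mul_assoc, hcd, mul_assoc]
  refine ⟨?_, ?_, ?_, ?_, ?_⟩
  · -- t₁ t₂ = t₂ t₁
    have hdA : d * (d⁻¹ * y₁) = y₁ := mul_inv_cancel_left₀ hd y₁
    have hdB : d * (d⁻¹ * y₂) = y₂ := mul_inv_cancel_left₀ hd y₂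
    have E2 : x₁ * (y₂ * (d⁻¹ * y₁)) = y₂ * y₁ + c * (x₂ * (y₂ * (d⁻¹ * y₁))) := by
      have h₁ : y₂ * (d * (d⁻¹ * y₁))
          = x₁ * (y₂ * (d⁻¹ * y₁)) - c * (x₂ * (y₂ * (d⁻¹ * y₁))) := by
        calc y₂ * (d * (d⁻¹ * y₁)) = (y₂ * d) * (d⁻¹ * y₁) := (mul_assoc _ _ _).symm
          _ = (x₁ * y₂ - c * (x₂ * y₂)) * (d⁻¹ * y₁) := by
              rw [hdd, mul_sub, h21, h22c]
          _ = x₁ * (y₂ * (d⁻¹ * y₁)) - c * (x₂ * (y₂ * (d⁻¹ * y₁))) := by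
              noncomm_ring
      have h₂ : x₁ * (y₂ * (d⁻¹ * y₁)) - c * (x₂ * (y₂ * (d⁻¹ * y₁))) = y₂ * y₁ := by
        rw [← h₁, hdA]
      linear_combination (norm := noncomm_ring) h₂
    have E1 : x₂ * (y₁ * (d⁻¹ * y₂)) = c * (x₁ * (y₁ * (d⁻¹ * y₂))) - y₁ * y₂ := by
      have h₁ : y₁ * (d * (d⁻¹ * y₂))
          = c * (x₁ * (y₁ * (d⁻¹ * y₂))) - x₂ * (y₁ * (d⁻¹ * y₂)) := by
        calc y₁ * (d * (d⁻¹ * y₂)) = (y₁ * d) * (d⁻¹ * y₂) := (mul_assoc _ _ _).symm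
          _ = (c * (x₁ * y₁) - x₂ * y₁) * (d⁻¹ * y₂) := by
              rw [hdd, mul_sub, h11c, h12]
          _ = c * (x₁ * (y₁ * (d⁻¹ * y₂))) - x₂ * (y₁ * (d⁻¹ * y₂)) := by
              noncomm_ring
      have h₂ : c * (x₁ * (y₁ * (d⁻¹ * y₂))) - x₂ * (y₁ * (d⁻¹ * y₂)) = y₁ * y₂ := by
        rw [← h₁, hdB]
      linear_combination (norm := noncomm_ring) -h₂
    have key1 : (x₁ * y₂ - x₂ * y₁) * (d⁻¹ * (y₂ - y₁))
        = (y₂ - y₁) * (d⁻¹ * (x₁ * y₂ - x₂ * y₁)) := by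
      have lhs : (x₁ * y₂ - x₂ * y₁) * (d⁻¹ * (y₂ - y₁))
          = x₁ * (y₂ * (d⁻¹ * y₂)) - x₁ * (y₂ * (d⁻¹ * y₁))
            - x₂ * (y₁ * (d⁻¹ * y₂)) + x₂ * (y₁ * (d⁻¹ * y₁)) := by
        rw [mul_sub d⁻¹]; noncomm_ring
      have hru : d⁻¹ * (x₁ * y₂ - x₂ * y₁) = x₁ * (d⁻¹ * y₂) - x₂ * (d⁻¹ * y₁) := by
        rw [mul_sub, ← mul_assoc, ← hx1d, mul_assoc, ← mul_assoc d⁻¹ x₂, ← hx2d, mul_assoc]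
      have rhs : (y₂ - y₁) * (d⁻¹ * (x₁ * y₂ - x₂ * y₁))
          = x₁ * (y₂ * (d⁻¹ * y₂)) - c * (x₂ * (y₂ * (d⁻¹ * y₁)))
            - c * (x₁ * (y₁ * (d⁻¹ * y₂))) + x₂ * (y₁ * (d⁻¹ * y₁)) := by
        rw [hru]
        have : (y₂ - y₁) * (x₁ * (d⁻¹ * y₂) - x₂ * (d⁻¹ * y₁))
            = y₂ * (x₁ * (d⁻¹ * y₂)) - y₂ * (x₂ * (d⁻¹ * y₁))
              - y₁ * (x₁ * (d⁻¹ * y₂)) + y₁ * (x₂ * (d⁻¹ * y₁)) := by noncomm_ring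
        rw [this, hD', hB', hA', hC']
      rw [lhs, rhs, E1, E2, hyy]
      noncomm_ring
    rw [ht₁, ht₂, mul_neg, neg_mul, neg_inj, mul_assoc, mul_assoc]
    exact congrArg (fun z => d⁻¹ * z) key1
  · -- t₁ e₂ = q • (e₂ t₁)
    rw [ht₁, he₂, Algebra.smul_def, ← hc]
    simp only [mul_assoc, mul_sub, sub_mul, mul_add, add_mul,
      hx1d', hx2d', hcd', hA', hB', hC', hD', hE', hcx1, hcx2,
      h11c, h22c, h12, h21, hxx']
  · -- t₂ e₂ = q • (e₂ t₂)
    rw [ht₂, he₂, Algebra.smul_def, ← hc]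
    simp only [neg_mul, mul_neg, mul_assoc, mul_sub, sub_mul, mul_add, add_mul,
      hx1d', hx2d', hcd', hA', hB', hC', hD', hE', hcx1, hcx2,
      h11c, h22c, h12, h21, hxx']
  · -- t₁ e₁ = e₁ t₁ + (1-q) • (e₂ t₂)
    rw [ht₁, ht₂, he₁, he₂, Algebra.smul_def, map_sub, map_one, ← hc]
    simp only [neg_mul, mul_neg, mul_assoc, mul_sub, sub_mul, mul_add, add_mul, one_mul,
      hx1d', hx2d', hcd', hA', hB', hC', hD', hE', hcx1, hcx2,
      h11c, h22c, h12, h21, hxx']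
    abel
  · -- t₂ e₁ = q • (e₁ t₂) + (q-1) • t₁
    rw [ht₁, ht₂, he₁, Algebra.smul_def q, Algebra.smul_def (q-1), map_sub, map_one, ← hc]
    simp only [neg_mul, mul_neg, mul_assoc, mul_sub, sub_mul, mul_add, add_mul, one_mul,
      hx1d', hx2d', hcd', hA', hB', hC', hD', hE', hcx1, hcx2,
      h11c, h22c, h12, h21, hxx']
    abel
end

section
/- In ℤ[x_1,...,x_n], for 0 ≤ k ≤ n, the quotient a(n-1+1,...,n-k+1, n-k-1,...,1,0) / a(n-1,n-2,...,0) (i.e. the Schur function s_{1^k 0^{n-k}} = a(λ+δ)/a(δ) for λ = (1,...,1,0,...,0)) equals the elementary symmetric polynomial e_k(x_1,...,x_n). -/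
open MvPolynomial Finset

/-- If two exponents coincide, the alternating sum vanishes. -/
lemma alt_sum_zero {n : ℕ} (f : Fin n → ℕ) {i j : Fin n} (hij : i ≠ j) (hf : f i = f j) :
    ∑ w : Equiv.Perm (Fin n), (Equiv.Perm.sign w : ℤ) •
        rename w (∏ a : Fin n, (X a : MvPolynomial (Fin n) ℤ) ^ f a) = 0 := by
  set P : MvPolynomial (Fin n) ℤ := ∏ a : Fin n, X a ^ f a with hP
  set σ := Equiv.swap i j with hσ
  have hfσ : ∀ b, f (σ b) = f b := by
    intro b
    rcases eq_or_ne b i with rfl | hbi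
    · rw [hσ, Equiv.swap_apply_left, ← hf]
    rcases eq_or_ne b j with rfl | hbj
    · rw [hσ, Equiv.swap_apply_right, hf]
    · rw [hσ, Equiv.swap_apply_of_ne_of_ne hbi hbj]
  have hswap : rename (⇑σ) P = P := by
    rw [hP, map_prod]
    simp_rw [map_pow, rename_X]
    calc ∏ a : Fin n, (X (σ a) : MvPolynomial (Fin n) ℤ) ^ f a
        = ∏ a : Fin n, (X (σ a) : MvPolynomial (Fin n) ℤ) ^ f (σ (σ a)) := by
          refine Finset.prod_congr rfl fun a _ => ?_
          rw [hfσ, hfσ]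
      _ = ∏ b : Fin n, (X b : MvPolynomial (Fin n) ℤ) ^ f (σ b) :=
          Equiv.prod_comp σ (fun b => (X b : MvPolynomial (Fin n) ℤ) ^ f (σ b))
      _ = P := by
          rw [hP]; exact Finset.prod_congr rfl fun b _ => by rw [hfσ]
  set g : Equiv.Perm (Fin n) → MvPolynomial (Fin n) ℤ :=
    fun w => (Equiv.Perm.sign w : ℤ) • rename w P with hg
  have hcomp : ∑ w : Equiv.Perm (Fin n), g (w * σ) = ∑ w : Equiv.Perm (Fin n), g w :=
    Equiv.sum_comp (Equiv.mulRight σ) g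
  have hneg : ∀ w : Equiv.Perm (Fin n), g (w * σ) = - g w := by
    intro w
    have h1 : (Equiv.Perm.sign (w * σ) : ℤ) = -(Equiv.Perm.sign w : ℤ) := by
      rw [map_mul, hσ, Equiv.Perm.sign_swap hij]
      push_cast
      ring
    have h2 : rename (⇑(w * σ)) P = rename (⇑w) P := by
      rw [Equiv.Perm.coe_mul, ← rename_rename, hswap]
    rw [hg]
    simp only [h1, h2, neg_smul]
  have : (∑ w : Equiv.Perm (Fin n), g w) + ∑ w : Equiv.Perm (Fin n), g w = 0 := by
    nth_rewrite 1 [← hcomp]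
    simp_rw [hneg]
    rw [Finset.sum_neg_distrib, neg_add_cancel]
  exact add_self_eq_zero.mp this

lemma card_filter_lt {n m : ℕ} (hm : m ≤ n) :
    (Finset.univ.filter (fun i : Fin n => (i : ℕ) < m)).card = m := by
  have : Finset.univ.filter (fun i : Fin n => (i : ℕ) < m)
      = Finset.map (Fin.castLEEmb hm) Finset.univ := by
    ext a
    simp only [Finset.mem_filter, Finset.mem_univ, true_and, Finset.mem_map]
    constructor
    · intro h; exact ⟨⟨a, h⟩, Fin.ext rfl⟩
    · rintro ⟨b, -, rfl⟩; exact b.isLt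
  rw [this, Finset.card_map, Finset.card_univ, Fintype.card_fin]

/-- A finset of `Fin n` closed under predecessors is an initial segment. -/
lemma lower_set_eq {n : ℕ} (S : Finset (Fin n))
    (hd : ∀ i : Fin n, ∀ h : (i : ℕ) + 1 < n, (⟨(i : ℕ) + 1, h⟩ : Fin n) ∈ S → i ∈ S) :
    S = Finset.univ.filter (fun i : Fin n => (i : ℕ) < S.card) := by
  have hchain : ∀ d : ℕ, ∀ j : Fin n, j ∈ S → ∀ i : Fin n, (i : ℕ) + d = (j : ℕ) → i ∈ S := by
    intro d
    induction d with
    | zero => intro j hj i hi; have : i = j := Fin.ext (by omega); rwa [this]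
    | succ d ih =>
      intro j hj i hi
      have h1 : (i : ℕ) + 1 < n := by have := j.isLt; omega
      exact hd i h1 (ih j hj ⟨(i : ℕ) + 1, h1⟩ (by simp; omega))
  have hsub : S ⊆ Finset.univ.filter (fun i : Fin n => (i : ℕ) < S.card) := by
    intro i hi
    simp only [Finset.mem_filter, Finset.mem_univ, true_and]
    have hIic : Finset.Iic i ⊆ S := by
      intro b hb
      simp only [Finset.mem_Iic] at hb
      exact hchain ((i : ℕ) - (b : ℕ)) i hi b (by omega)
    have := Finset.card_le_card hIic
    rw [Fin.card_Iic] at this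
    omega
  refine Finset.eq_of_subset_of_card_le hsub ?_
  rw [card_filter_lt (by have := Finset.card_le_univ S; simpa using this)]

/-- Bialternant formula for `λ = (1^k, 0^{n-k})`: the quotient `a(λ+δ)/a(δ)` is the
elementary symmetric polynomial `e_k`, stated as `a(λ+δ) = e_k · a(δ)` in `ℤ[x_1,…,x_n]`,
where `a(i_1,…,i_n) = ∑_{w∈Sₙ} sgn(w) w(x_1^{i_1}⋯x_n^{i_n})` and `δ = (n-1,…,1,0)`. -/
theorem schur_one_power_eq_esymm (n k : ℕ) (hk : k ≤ n) :
    ∑ w : Equiv.Perm (Fin n),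
        (Equiv.Perm.sign w : ℤ) •
          rename w (∏ i : Fin n,
            (X i : MvPolynomial (Fin n) ℤ) ^ ((if (i : ℕ) < k then 1 else 0) + (n - 1 - (i : ℕ)))) =
      (∑ S ∈ Finset.univ.powersetCard k, ∏ i ∈ S, (X i : MvPolynomial (Fin n) ℤ)) *
        ∑ w : Equiv.Perm (Fin n),
          (Equiv.Perm.sign w : ℤ) •
            rename w (∏ i : Fin n, (X i : MvPolynomial (Fin n) ℤ) ^ (n - 1 - (i : ℕ))) := by
  classical
  have hesymm : (∑ S ∈ Finset.univ.powersetCard k, ∏ i ∈ S, (X i : MvPolynomial (Fin n) ℤ))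
      = esymm (Fin n) ℤ k := rfl
  set fS : Finset (Fin n) → Fin n → ℕ :=
    fun S i => (if i ∈ S then 1 else 0) + (n - 1 - (i : ℕ)) with hfS
  set Pδ : MvPolynomial (Fin n) ℤ := ∏ i : Fin n, X i ^ (n - 1 - (i : ℕ)) with hPδ
  -- step 1: e_k * Pδ = ∑_S ∏ X^(fS)
  have hmul : esymm (Fin n) ℤ k * Pδ
      = ∑ S ∈ Finset.univ.powersetCard k, ∏ i : Fin n, (X i : MvPolynomial (Fin n) ℤ) ^ fS S i := by
    rw [esymm, Finset.sum_mul]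
    refine Finset.sum_congr rfl fun S hS => ?_
    have h1 : (∏ i : Fin n, (X i : MvPolynomial (Fin n) ℤ) ^ (if i ∈ S then 1 else 0))
        = ∏ i ∈ S, (X i : MvPolynomial (Fin n) ℤ) := by
      simp only [pow_ite, pow_one, pow_zero]
      rw [Finset.prod_ite_mem, Finset.univ_inter]
    rw [← h1, hPδ, ← Finset.prod_mul_distrib]
    exact Finset.prod_congr rfl fun i _ => by rw [← pow_add]
  -- step 2: rewrite RHS as double sum
  rw [hesymm, Finset.mul_sum]
  have hterm : ∀ w : Equiv.Perm (Fin n),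
      esymm (Fin n) ℤ k * ((Equiv.Perm.sign w : ℤ) • rename w Pδ)
      = ∑ S ∈ Finset.univ.powersetCard k, (Equiv.Perm.sign w : ℤ) •
          rename w (∏ i : Fin n, (X i : MvPolynomial (Fin n) ℤ) ^ fS S i) := by
    intro w
    rw [mul_smul_comm]
    have : esymm (Fin n) ℤ k * rename (⇑w) Pδ = rename (⇑w) (esymm (Fin n) ℤ k * Pδ) := by
      rw [map_mul, rename_esymm]
    rw [this, hmul, map_sum, Finset.smul_sum]
  simp_rw [hterm]
  rw [Finset.sum_comm]
  -- step 3: all terms vanish except S₀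
  set S₀ : Finset (Fin n) := Finset.univ.filter (fun i : Fin n => (i : ℕ) < k) with hS₀
  have hS₀card : S₀.card = k := card_filter_lt hk
  have hS₀mem : S₀ ∈ Finset.univ.powersetCard k := by
    rw [Finset.mem_powersetCard]
    exact ⟨Finset.subset_univ _, hS₀card⟩
  rw [Finset.sum_eq_single_of_mem S₀ hS₀mem ?_]
  · -- the surviving term equals the LHS
    have hexp : ∀ i : Fin n, ((if (i : ℕ) < k then 1 else 0) + (n - 1 - (i : ℕ))) = fS S₀ i := by
      intro i; rw [hfS]; simp [hS₀]
    refine Finset.sum_congr rfl fun w _ => ?_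
    congr 1
    exact congrArg _ (Finset.prod_congr rfl fun i _ => by rw [hexp i])
  · intro S hS hne
    have hcard : S.card = k := (Finset.mem_powersetCard.mp hS).2
    -- there is a descent
    have hdesc : ∃ i : Fin n, ∃ h : (i : ℕ) + 1 < n,
        (⟨(i : ℕ) + 1, h⟩ : Fin n) ∈ S ∧ i ∉ S := by
      by_contra hcon
      push_neg at hcon
      apply hne
      rw [lower_set_eq S hcon, hcard]
    obtain ⟨i, h, hmem, hnmem⟩ := hdesc
    have hij : i ≠ (⟨(i : ℕ) + 1, h⟩ : Fin n) := by
      intro he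
      have := congrArg Fin.val he
      simp at this
    refine alt_sum_zero (fS S) hij ?_
    show (if i ∈ S then 1 else 0) + (n - 1 - (i : ℕ))
        = (if (⟨(i : ℕ) + 1, h⟩ : Fin n) ∈ S then 1 else 0)
          + (n - 1 - ((⟨(i : ℕ) + 1, h⟩ : Fin n) : ℕ))
    rw [if_neg hnmem, if_pos hmem]
    show 0 + (n - 1 - (i : ℕ)) = 1 + (n - 1 - ((i : ℕ) + 1))
    omega
end

section
/- Let q be a nonzero element of a field K that is not a root of unity, let Λ = K[X_1^{±1},...,X_m^{±1}] be a Laurent polynomial ring, and let ℤ^m act on Λ by δ^i · X_j = q^{-δ_{ij}} X_j (extended to algebra automorphisms). This action is faithful, and the monoid ℤ^m is K-separating on the invariant field for the natural W-action in the sense that distinct elements of ℤ^m restrict to distinct maps on the subfield generated by the power sums X_1^2 + ... + X_m^2. -/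
/-! The element `v ∈ ℤ^m` multiplies the coefficient of `X^e` by `q^{-⟨v,e⟩}`, and `n ↦ q^n`
is injective on `ℤ` because `q` is nonzero and not a root of unity. Comparing the coefficients of
`X_i^2` in the images of `X_1^2 + ⋯ + X_m^2` therefore gives `2 v_i = 2 w_i`; faithfulness follows
because equal actions agree on that element. -/

/-- The action of `v ∈ ℤ^m` on the Laurent polynomial algebra
`Λ = K[X_1^{±1},…,X_m^{±1}]` (realized as `AddMonoidAlgebra K (Fin m → ℤ)`), scaling the
monomial `X^e` by `q^{-⟨v,e⟩}`. -/
noncomputable def laurentScalingAction (K : Type*) [Field K] (q : K) (m : ℕ)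
    (v : Fin m → ℤ) (f : AddMonoidAlgebra K (Fin m → ℤ)) :
    AddMonoidAlgebra K (Fin m → ℤ) :=
  AddMonoidAlgebra.ofCoeff (f.coeff.sum fun e c => Finsupp.single e (q ^ (-(∑ i, v i * e i)) * c))

lemma zpow_injective_of_not_isOfFinOrder {G₀ : Type*} [GroupWithZero G₀] {q : G₀}
    (hq0 : q ≠ 0) (hq : ¬IsOfFinOrder q) : Function.Injective (q ^ · : ℤ → G₀) := by
  intro a b h
  have hu : ¬IsOfFinOrder (Units.mk0 q hq0) := by rwa [← Units.isOfFinOrder_val]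
  exact injective_zpow_iff_not_isOfFinOrder.2 hu (Units.val_injective (by simpa using h))

lemma Pi.single_left_injective {ι R : Type*} [DecidableEq ι] [Zero R] {r : R} (hr : r ≠ 0) :
    Function.Injective fun i : ι => Pi.single i r := by
  intro i j h
  simpa [Pi.single_apply, hr] using congrFun h i

lemma AddMonoidAlgebra.coeff_sum_ofCoeff_single_of_injective {R G ι : Type*} [Semiring R]
    [Fintype ι] {d : ι → G} (hd : Function.Injective d) (c : R) (i : ι) :
    (∑ j, AddMonoidAlgebra.ofCoeff (Finsupp.single (d j) c)).coeff (d i) = c := by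
  classical
  rw [← AddMonoidAlgebra.ofCoeff_sum, AddMonoidAlgebra.coeff_ofCoeff, Finsupp.finsetSum_apply]
  simp [Finsupp.single_apply, hd.eq_iff]

section LaurentScalingAction

variable {K : Type*} [Field K] {q : K} {m : ℕ}

lemma coeff_laurentScalingAction (v : Fin m → ℤ) (f : AddMonoidAlgebra K (Fin m → ℤ))
    (e : Fin m → ℤ) :
    (laurentScalingAction K q m v f).coeff e = q ^ (-(v ⬝ᵥ e)) * f.coeff e := by
  classical
  rw [laurentScalingAction, AddMonoidAlgebra.coeff_ofCoeff, Finsupp.sum_apply]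
  simp only [Finsupp.single_apply]
  rw [Finsupp.sum_ite_eq']
  split_ifs with he
  · rfl
  · rw [Finsupp.notMem_support_iff.1 he, mul_zero]

lemma dotProduct_eq_of_laurentScalingAction_eq (hq0 : q ≠ 0) (hq : ¬IsOfFinOrder q)
    {v w : Fin m → ℤ} {f : AddMonoidAlgebra K (Fin m → ℤ)}
    (h : laurentScalingAction K q m v f = laurentScalingAction K q m w f)
    {e : Fin m → ℤ} (he : f.coeff e ≠ 0) : v ⬝ᵥ e = w ⬝ᵥ e := by
  have h' := congrArg (AddMonoidAlgebra.coeff · e) h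
  simp only [coeff_laurentScalingAction, mul_left_inj' he] at h'
  exact neg_inj.1 (zpow_injective_of_not_isOfFinOrder hq0 hq h')

lemma laurentScalingAction_injective_of_coeff_single_ne_zero (hq0 : q ≠ 0)
    (hq : ¬IsOfFinOrder q) {f : AddMonoidAlgebra K (Fin m → ℤ)} {k : ℤ} (hk : k ≠ 0)
    (hf : ∀ i, f.coeff (Pi.single i k) ≠ 0) :
    Function.Injective fun v => laurentScalingAction K q m v f := by
  intro v w h
  funext i
  have hvw := dotProduct_eq_of_laurentScalingAction_eq hq0 hq h (hf i)
  simpa [dotProduct_single, hk] using hvw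

end LaurentScalingAction

/-- For `q` not a root of unity, the scaling action of `ℤ^m` on the Laurent polynomial
algebra is faithful, and `ℤ^m` is `K`-separating: distinct elements of `ℤ^m` already act
differently on the element `X_1^2 + ⋯ + X_m^2` generating the relevant subfield. -/
theorem laurent_action_faithful_and_separating (K : Type*) [Field K] (q : K)
    (hq0 : q ≠ 0) (hq : ∀ k : ℕ, 0 < k → q ^ k ≠ 1) (m : ℕ) :
    Function.Injective (laurentScalingAction K q m) ∧
    ∀ v w : Fin m → ℤ,
      laurentScalingAction K q m v
          (∑ i : Fin m, AddMonoidAlgebra.ofCoeff (Finsupp.single (Pi.single i 2 : Fin m → ℤ) (1 : K))) =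
        laurentScalingAction K q m w
          (∑ i : Fin m, AddMonoidAlgebra.ofCoeff (Finsupp.single (Pi.single i 2 : Fin m → ℤ) (1 : K))) →
      v = w := by
  have hq' : ¬IsOfFinOrder q := by
    rw [isOfFinOrder_iff_pow_eq_one]
    rintro ⟨k, hk, hqk⟩
    exact hq k hk hqk
  have hcoeff : ∀ i, (∑ j : Fin m, AddMonoidAlgebra.ofCoeff
      (Finsupp.single (Pi.single j 2 : Fin m → ℤ) (1 : K))).coeff (Pi.single i 2) ≠ 0 := by
    intro i
    rw [AddMonoidAlgebra.coeff_sum_ofCoeff_single_of_injective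
      (Pi.single_left_injective two_ne_zero)]
    exact one_ne_zero
  have separating :=
    laurentScalingAction_injective_of_coeff_single_ne_zero hq0 hq' two_ne_zero hcoeff
  exact ⟨fun v w h => separating (congrFun h _), fun v w h => separating h⟩
end

section
/- Let F be a skew field containing a field K, and let T_1,...,T_n, E_0,...,E_n ∈ F satisfy [T_i,T_j] = 0 and [E_k,E_l] = 0 for all applicable indices, together with the relation T_j E_k - q^{[j+k>n]} E_k T_j = (q-1) ∑_{i ∈ ℤ\I(n-(j+k))} (-1)^{i+[i<0]} E_{k+i} T_{j+i} (with T_j = 0 for j ∉ {1,...,n}, E_k = 0 for k ∉ {0,...,n}), from which in particular [T_j, E_0] = 0 and T_j E_n = q E_n T_j. Define T̃_j = E_j T_1 T_n - (-1)^j E_0 T_{n-j} T_1 - (-1)^{n-j} E_n T_{n+1-j} T_n for j ∈ {1,...,n-1}. Then T_1 T̃_j = T̃_j T_1 and T_n T̃_j = q T̃_j T_n for all j ∈ {1,...,n-1}. -/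
/-- In the inductive procedure (Proposition prp:inductive_procedure), with
`T_1,…,T_n, E_0,…,E_n` in a skew field `F` over `K` satisfying the commutation
assumptions and the master relation
`T_j E_k - q^{[j+k>n]} E_k T_j = (q-1) ∑_{i ∉ I(n-(j+k))} (-1)^{i+[i<0]} E_{k+i} T_{j+i}`
(with `T_j = 0` outside `{1,…,n}` and `E_k = 0` outside `{0,…,n}`), the elements
`T̃_j = E_j T_1 T_n - (-1)^j E_0 T_{n-j} T_1 - (-1)^{n-j} E_n T_{n+1-j} T_n` satisfy
`T_1 T̃_j = T̃_j T_1` and `T_n T̃_j = q T̃_j T_n` for `j ∈ {1,…,n-1}`. -/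
theorem tilde_T_commutations (K : Type*) [Field K] (q : K) (hq : q ≠ 0)
    (F : Type*) [DivisionRing F] [Algebra K F] (n : ℤ) (hn : 1 ≤ n)
    (T E : ℤ → F)
    (hTsupp : ∀ j : ℤ, j ∉ Finset.Icc 1 n → T j = 0)
    (hEsupp : ∀ k : ℤ, k ∉ Finset.Icc 0 n → E k = 0)
    (hTT : ∀ i j, T i * T j = T j * T i)
    (hEE : ∀ k l, E k * E l = E l * E k)
    (hTE0 : ∀ j, T j * E 0 = E 0 * T j)
    (hTEn : ∀ j, T j * E n = q • (E n * T j))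
    (hmaster : ∀ j ∈ Finset.Icc (1 : ℤ) n, ∀ k ∈ Finset.Icc (0 : ℤ) n,
      T j * E k - (q ^ (if j + k > n then 1 else 0)) • (E k * T j) =
        (q - 1) •
          ∑ᶠ i ∈ {i : ℤ | i ∉ Finset.Icc (min 0 (n - (j + k) + 1)) (max 0 (n - (j + k)))},
            ((-1 : K) ^ (i + if i < 0 then 1 else 0)) • (E (k + i) * T (j + i))) :
    let Ttil : ℤ → F := fun j =>
      E j * T 1 * T n - ((-1 : K) ^ j) • (E 0 * T (n - j) * T 1) -
        ((-1 : K) ^ (n - j)) • (E n * T (n + 1 - j) * T n)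
    ∀ j ∈ Finset.Icc (1 : ℤ) (n - 1),
      T 1 * Ttil j = Ttil j * T 1 ∧ T n * Ttil j = q • (Ttil j * T n) := by
  intro Ttil j hj
  rw [Finset.mem_Icc] at hj
  obtain ⟨hj1, hj2⟩ := hj
  have hneg0 : ((-1 : K)) ≠ 0 := by norm_num
  -- (-1)^(-j+1) = -(-1)^j
  have hneg : ((-1 : K)) ^ (-j + 1) = -((-1 : K)) ^ j := by
    have h1 : ((-1 : K)) ^ j * ((-1 : K)) ^ (-j + 1) = -1 := by
      rw [← zpow_add₀ hneg0, show j + (-j + 1) = 1 from by ring, zpow_one]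
    have hsq : ((-1 : K)) ^ j * ((-1 : K)) ^ j = 1 := by
      rw [← zpow_add₀ hneg0, show j + j = 2 * j from by ring, zpow_mul]
      norm_num
    calc ((-1 : K)) ^ (-j + 1) = ((-1 : K)) ^ j * ((-1 : K)) ^ j * ((-1 : K)) ^ (-j + 1) := by
          rw [hsq, one_mul]
      _ = ((-1 : K)) ^ j * (-1) := by rw [mul_assoc, h1]
      _ = -((-1 : K)) ^ j := by ring
  -- Lemma A : T 1 * E j
  have hA : T 1 * E j = E j * T 1 + ((q - 1) * (-1 : K) ^ (n - j)) • (E n * T (n + 1 - j)) := by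
    have hm := hmaster 1 (by rw [Finset.mem_Icc]; omega) j (by rw [Finset.mem_Icc]; omega)
    rw [if_neg (by omega : ¬ (1 + j > n)), pow_zero, one_smul] at hm
    have hsum : ∑ᶠ i ∈ {i : ℤ | i ∉ Finset.Icc (min 0 (n - (1 + j) + 1)) (max 0 (n - (1 + j)))},
        ((-1 : K) ^ (i + if i < 0 then 1 else 0)) • (E (j + i) * T (1 + i))
        = ((-1 : K) ^ (n - j)) • (E n * T (n + 1 - j)) := by
      rw [finsum_mem_def, finsum_eq_single _ (n - j)]
      · rw [Set.indicator_of_mem (by simp only [Set.mem_setOf_eq, Finset.mem_Icc]; omega)]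
        rw [if_neg (by omega : ¬ (n - j < 0)), add_zero,
          show j + (n - j) = n from by ring, show 1 + (n - j) = n + 1 - j from by ring]
      · intro x hx
        by_cases hxs : x ∈ {i : ℤ | i ∉ Finset.Icc (min 0 (n - (1 + j) + 1)) (max 0 (n - (1 + j)))}
        · rw [Set.indicator_of_mem hxs]
          simp only [Set.mem_setOf_eq, Finset.mem_Icc] at hxs
          rcases lt_or_ge x 0 with h | h
          · rw [hTsupp (1 + x) (by rw [Finset.mem_Icc]; omega), mul_zero, smul_zero]
          · rw [hEsupp (j + x) (by rw [Finset.mem_Icc]; omega), zero_mul, smul_zero]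
        · exact Set.indicator_of_notMem hxs _
    rw [hsum, smul_smul] at hm
    rw [sub_eq_iff_eq_add] at hm
    rw [hm, add_comm]
  -- Lemma B : T n * E j
  have hB : T n * E j = q • (E j * T n) - ((q - 1) * (-1 : K) ^ j) • (E 0 * T (n - j)) := by
    have hm := hmaster n (by rw [Finset.mem_Icc]; omega) j (by rw [Finset.mem_Icc]; omega)
    rw [if_pos (by omega : n + j > n), pow_one] at hm
    have hsum : ∑ᶠ i ∈ {i : ℤ | i ∉ Finset.Icc (min 0 (n - (n + j) + 1)) (max 0 (n - (n + j)))},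
        ((-1 : K) ^ (i + if i < 0 then 1 else 0)) • (E (j + i) * T (n + i))
        = (-((-1 : K) ^ j)) • (E 0 * T (n - j)) := by
      rw [finsum_mem_def, finsum_eq_single _ (-j)]
      · rw [Set.indicator_of_mem (by simp only [Set.mem_setOf_eq, Finset.mem_Icc]; omega)]
        rw [if_pos (by omega : -j < 0), hneg,
          show j + (-j) = 0 from by ring, show n + (-j) = n - j from by ring]
      · intro x hx
        by_cases hxs : x ∈ {i : ℤ | i ∉ Finset.Icc (min 0 (n - (n + j) + 1)) (max 0 (n - (n + j)))}
        · rw [Set.indicator_of_mem hxs]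
          simp only [Set.mem_setOf_eq, Finset.mem_Icc] at hxs
          rcases lt_or_ge x 0 with h | h
          · rw [hEsupp (j + x) (by rw [Finset.mem_Icc]; omega), zero_mul, smul_zero]
          · rw [hTsupp (n + x) (by rw [Finset.mem_Icc]; omega), mul_zero, smul_zero]
        · exact Set.indicator_of_notMem hxs _
    rw [hsum, smul_smul] at hm
    rw [sub_eq_iff_eq_add] at hm
    rw [hm]
    module
  -- generalized (right-factor) versions
  have hA' : ∀ x : F, T 1 * (E j * x)
      = E j * (T 1 * x) + ((q - 1) * (-1 : K) ^ (n - j)) • (E n * (T (n + 1 - j) * x)) := by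
    intro x
    rw [← mul_assoc, hA, add_mul, smul_mul_assoc, mul_assoc, mul_assoc]
  have hB' : ∀ x : F, T n * (E j * x)
      = q • (E j * (T n * x)) - ((q - 1) * (-1 : K) ^ j) • (E 0 * (T (n - j) * x)) := by
    intro x
    rw [← mul_assoc, hB, sub_mul, smul_mul_assoc, smul_mul_assoc, mul_assoc, mul_assoc]
  have hTE0' : ∀ (a : ℤ) (x : F), T a * (E 0 * x) = E 0 * (T a * x) := by
    intro a x; rw [← mul_assoc, hTE0, mul_assoc]
  have hTEn' : ∀ (a : ℤ) (x : F), T a * (E n * x) = q • (E n * (T a * x)) := by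
    intro a x; rw [← mul_assoc, hTEn, smul_mul_assoc, mul_assoc]
  have hTT' : ∀ (a b : ℤ) (x : F), T a * (T b * x) = T b * (T a * x) := by
    intro a b x; rw [← mul_assoc, hTT, mul_assoc]
  simp only [Ttil]
  set a : K := (-1 : K) ^ j with ha
  set b : K := (-1 : K) ^ (n - j) with hb
  constructor
  · -- T 1 commutes
    simp only [mul_sub, sub_mul, mul_smul_comm, smul_mul_assoc, mul_assoc]
    rw [hA' (T 1 * T n), hTE0' 1 (T (n - j) * T 1), hTEn' 1 (T (n + 1 - j) * T n),
      hTT' 1 (n - j) (T 1), hTT' 1 (n + 1 - j) (T n), hTT n 1]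
    module
  · -- T n relation
    simp only [mul_sub, sub_mul, mul_smul_comm, smul_mul_assoc, mul_assoc]
    rw [hB' (T 1 * T n), hTE0' n (T (n - j) * T 1), hTEn' n (T (n + 1 - j) * T n),
      hTT' n 1 (T n), hTT' n (n - j) (T 1), hTT n 1, hTT' n (n + 1 - j) (T n)]
    module
end

section
/- Let q ∈ K\{0} and consider elements X_1, Y_1, X_2, Y_2 of a skew field satisfying [Y_1,Y_2] = 0, X_2 X_1 = q X_1 X_2, [Y_1,X_2] = 0, Y_2 X_1 = q² X_1 Y_2, Y_1 X_1 = q X_1 Y_1, Y_2 X_2 = q^{-1} X_2 Y_2. Define X̂_1 = X_1, X̂_2 = Y_1 X_2^{-1}, Ŷ_1 = Y_1, Ŷ_2 = Y_1^{-2} Y_2. Then [X̂_1, X̂_2] = 0, [Ŷ_1, Ŷ_2] = 0, and Ŷ_i X̂_j = q^{δ_{ij}} X̂_j Ŷ_i for all i,j ∈ {1,2}. -/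
private lemma conj_aux {K F : Type*} [Field K] [DivisionRing F] [Algebra K F]
    (q : K) (a b : F) (hb : b ≠ 0) (h : b * a = q • (a * b)) :
    a * b⁻¹ = q • (b⁻¹ * a) := by
  have h1 : a = q • (b⁻¹ * a * b) := by
    conv_lhs => rw [← inv_mul_cancel_left₀ hb a, ← mul_assoc]
    rw [mul_assoc, h, mul_smul_comm, mul_assoc]
  calc a * b⁻¹ = q • (b⁻¹ * a * b) * b⁻¹ := by rw [← h1]
    _ = q • (b⁻¹ * a) := by rw [smul_mul_assoc, mul_inv_cancel_right₀ hb]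

private lemma comm_inv {F : Type*} [DivisionRing F]
    (a b : F) (hb : b ≠ 0) (h : b * a = a * b) : a * b⁻¹ = b⁻¹ * a := by
  rw [eq_comm, inv_mul_eq_iff_eq_mul₀ hb, ← mul_assoc, h, mul_inv_cancel_right₀ hb]

private lemma qcomm_tr {K F : Type*} [Field K] [DivisionRing F] [Algebra K F]
    {q : K} {a b : F} (h : a * b = q • (b * a)) (z : F) :
    a * (b * z) = q • (b * (a * z)) := by
  rw [← mul_assoc, h, smul_mul_assoc, mul_assoc]

private lemma comm_tr {F : Type*} [DivisionRing F]
    {a b : F} (h : a * b = b * a) (z : F) : a * (b * z) = b * (a * z) := by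
  rw [← mul_assoc, h, mul_assoc]

/-- The `n = 2` normal-form change of variables: if `X_1, Y_1, X_2, Y_2` in a skew field
over `K` satisfy `[Y_1,Y_2] = 0`, `X_2 X_1 = q X_1 X_2`, `[Y_1,X_2] = 0`,
`Y_2 X_1 = q² X_1 Y_2`, `Y_1 X_1 = q X_1 Y_1`, `Y_2 X_2 = q⁻¹ X_2 Y_2`, then
`X̂_1 = X_1`, `X̂_2 = Y_1 X_2⁻¹`, `Ŷ_1 = Y_1`, `Ŷ_2 = Y_1⁻² Y_2` satisfy
`[X̂_1,X̂_2] = 0`, `[Ŷ_1,Ŷ_2] = 0`, and `Ŷ_i X̂_j = q^{δ_{ij}} X̂_j Ŷ_i`. -/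
theorem normal_form_change_of_variables_n2 (K : Type*) [Field K] (q : K) (hq : q ≠ 0)
    (F : Type*) [DivisionRing F] [Algebra K F] (X₁ X₂ Y₁ Y₂ : F)
    (hX₂ : X₂ ≠ 0) (hY₁ : Y₁ ≠ 0)
    (hYY : Y₁ * Y₂ = Y₂ * Y₁)
    (hXX : X₂ * X₁ = q • (X₁ * X₂))
    (hY1X2 : Y₁ * X₂ = X₂ * Y₁)
    (hY2X1 : Y₂ * X₁ = (q ^ 2) • (X₁ * Y₂))
    (hY1X1 : Y₁ * X₁ = q • (X₁ * Y₁))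
    (hY2X2 : Y₂ * X₂ = q⁻¹ • (X₂ * Y₂)) :
    let hX₁ : F := X₁
    let hX₂' : F := Y₁ * X₂⁻¹
    let hY₁ : F := Y₁
    let hY₂ : F := Y₁⁻¹ * Y₁⁻¹ * Y₂
    hX₁ * hX₂' = hX₂' * hX₁ ∧
      hY₁ * hY₂ = hY₂ * hY₁ ∧
      hY₁ * hX₁ = q • (hX₁ * hY₁) ∧
      hY₁ * hX₂' = hX₂' * hY₁ ∧
      hY₂ * hX₁ = hX₁ * hY₂ ∧
      hY₂ * hX₂' = q • (hX₂' * hY₂) := by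
  intro A B C D
  simp only [A, B, C, D]
  -- derived commutation relations
  have hX2Y2 : X₂ * Y₂ = q • (Y₂ * X₂) := by
    rw [hY2X2, smul_smul, mul_inv_cancel₀ hq, one_smul]
  have r7 : X₁ * X₂⁻¹ = q • (X₂⁻¹ * X₁) := conj_aux q X₁ X₂ hX₂ hXX
  have r2' : X₁ * Y₁⁻¹ = q • (Y₁⁻¹ * X₁) := conj_aux q X₁ Y₁ hY₁ hY1X1
  have r2 : Y₁⁻¹ * X₁ = q⁻¹ • (X₁ * Y₁⁻¹) := by
    rw [r2', smul_smul, inv_mul_cancel₀ hq, one_smul]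
  have r6 : Y₂ * X₂⁻¹ = q • (X₂⁻¹ * Y₂) := conj_aux q Y₂ X₂ hX₂ hX2Y2
  have r4 : Y₁ * X₂⁻¹ = X₂⁻¹ * Y₁ := comm_inv Y₁ X₂ hX₂ hY1X2.symm
  have r5 : Y₁⁻¹ * X₂⁻¹ = X₂⁻¹ * Y₁⁻¹ := (comm_inv X₂⁻¹ Y₁ hY₁ r4).symm
  have r9 : Y₂ * Y₁⁻¹ = Y₁⁻¹ * Y₂ := comm_inv Y₂ Y₁ hY₁ hYY
  refine ⟨?_, ?_, hY1X1, ?_, ?_, ?_⟩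
  · -- X₁ * (Y₁ * X₂⁻¹) = Y₁ * X₂⁻¹ * X₁
    have hXY1 : X₁ * Y₁ = q⁻¹ • (Y₁ * X₁) := by
      rw [hY1X1, smul_smul, inv_mul_cancel₀ hq, one_smul]
    rw [qcomm_tr hXY1, r7, mul_smul_comm, smul_smul, inv_mul_cancel₀ hq, one_smul,
      mul_assoc]
  · -- Y₁ * (Y₁⁻¹ * Y₁⁻¹ * Y₂) = Y₁⁻¹ * Y₁⁻¹ * Y₂ * Y₁
    rw [← mul_assoc, ← mul_assoc, mul_inv_cancel₀ hY₁, one_mul,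
      mul_assoc, mul_assoc, ← hYY, inv_mul_cancel_left₀ hY₁]
  · -- Y₁ * (Y₁ * X₂⁻¹) = Y₁ * X₂⁻¹ * Y₁
    rw [r4, ← mul_assoc, r4]
  · -- Y₁⁻¹ * Y₁⁻¹ * Y₂ * X₁ = X₁ * (Y₁⁻¹ * Y₁⁻¹ * Y₂)
    rw [mul_assoc, mul_assoc, hY2X1, mul_smul_comm, qcomm_tr r2, mul_smul_comm, mul_smul_comm,
      qcomm_tr r2]
    simp only [smul_smul]
    rw [show q ^ 2 * (q⁻¹ * q⁻¹) = 1 by rw [pow_two]; field_simp, one_smul, mul_assoc]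
  · rw [mul_assoc, mul_assoc, comm_tr hYY.symm, inv_mul_cancel_left₀ hY₁, r6,
      mul_smul_comm, comm_tr r5, r4, mul_assoc,
      mul_assoc Y₁⁻¹ Y₁⁻¹ Y₂, mul_inv_cancel_left₀ hY₁]
end
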